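/- arXiv:1511.03882 — 10 statements merged into one kernel-verified Lean document; each statement's English description precedes it below -/
import Mathlib

section
/- Let d ∈ (0, 1/2) and w ∈ ℝ. Then the pair (d, w) satisfies the system 21·w·(d²(1−d)⁵ + (1−d)²d⁵) = 1/8 and 35·w·(d³(1−d)⁴ + (1−d)³d⁴) = 1/8 if and only if d = (7−√7)/14 and w = 49/135. -/
/-- The asymptotic moment system for C¹ septic splines: for `d ∈ (0, 1/2)` and `w ∈ ℝ`,
the pair `(d, w)` solves the system iff `d = (7 - √7)/14` and `w = 49/135`. -/
theorem stmt_0 (d w : ℝ) (hd : d ∈ Set.Ioo (0 : ℝ) (1/2)) :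
    (21 * w * (d^2 * (1 - d)^5 + (1 - d)^2 * d^5) = 1/8 ∧
      35 * w * (d^3 * (1 - d)^4 + (1 - d)^3 * d^4) = 1/8) ↔
    (d = (7 - Real.sqrt 7) / 14 ∧ w = 49/135) := by
  obtain ⟨hd0, hd1⟩ := hd
  have hs : Real.sqrt 7 ^ 2 = 7 := Real.sq_sqrt (by norm_num)
  have hA : d^2 * (1 - d)^5 + (1 - d)^2 * d^5
      = (d*(1-d))^2 * (1 - 3*(d*(1-d))) := by ring
  have hB : d^3 * (1 - d)^4 + (1 - d)^3 * d^4 = (d*(1-d))^3 := by ring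
  constructor
  · rintro ⟨h1, h2⟩
    have hx : 0 < d*(1-d) := mul_pos hd0 (by linarith)
    have hw : w ≠ 0 := by
      intro h
      rw [h] at h2; norm_num at h2
    have h3 : w * (d*(1-d))^2 * (21 - 98*(d*(1-d))) = 0 := by
      linear_combination h1 - h2
    have h4 : 21 - 98*(d*(1-d)) = 0 := by
      rcases mul_eq_zero.1 h3 with h | h
      · rcases mul_eq_zero.1 h with h | h
        · exact absurd h hw
        · exact absurd h (pow_ne_zero 2 (ne_of_gt hx))
      · exact h
    have hxv : d*(1-d) = 3/14 := by linarith
    have hwv : w = 49/135 := by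
      rw [hB, hxv] at h2; linarith
    have h7 : (7 - 14*d)^2 = 7 := by nlinarith [hxv]
    have hsq : Real.sqrt ((7 - 14*d)^2) = 7 - 14*d :=
      Real.sqrt_sq (by linarith)
    rw [h7] at hsq
    exact ⟨by linarith, hwv⟩
  · rintro ⟨hdv, hwv⟩
    have hxv : d*(1-d) = 3/14 := by
      rw [hdv]; nlinarith [hs]
    rw [hA, hB, hxv, hwv]
    norm_num
end

section
/- Let d₁ = (7−√7)/14 and let h > 0. For every compactly supported C¹ spline f of degree at most 7 with knots hℤ, the integral of f over ℝ equals Σ_{i∈ℤ} h·( (37/135)·f(ih) + (49/135)·f((i+d₁)h) + (49/135)·f((i+1−d₁)h) ). -/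
open MeasureTheory

section QuadAux
open MeasureTheory intervalIntegral Polynomial Set

private lemma quad_pow (c h : ℝ) (n : ℕ) (hn : n < 8) :
    ∫ x in c..(c+h), x^n =
      h*((37/135)*c^n + (49/135)*(c+(7-Real.sqrt 7)/14*h)^n
        + (49/135)*(c+(1-(7-Real.sqrt 7)/14)*h)^n)
      + 37/270*h*((c+h)^n - c^n)
      - 1/180*h^2*((n:ℝ)*(c+h)^(n-1) - (n:ℝ)*c^(n-1)) := by
  have hs : Real.sqrt 7 ^ 2 = 7 := Real.sq_sqrt (by norm_num)
  set s := Real.sqrt 7 with hsdef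
  rw [integral_pow]
  interval_cases n <;> push_cast
  · linear_combination (0:ℝ) * hs
  · linear_combination (0:ℝ) * hs
  · linear_combination ((-1/270)*h^3) * hs
  · linear_combination ((-1/180)*h^4 + (-1/90)*c*h^3) * hs
  · linear_combination ((-43/7560)*h^5 + (-1/52920)*h^5*s^2 + (-1/45)*c*h^4 + (-1/45)*c^2*h^3) * hs
  · linear_combination ((-5/1008)*h^6 + (-1/21168)*h^6*s^2 + (-43/1512)*c*h^5 + (-1/10584)*c*h^5*s^2 + (-1/18)*c^2*h^4 + (-1/27)*c^3*h^3) * hs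
  · linear_combination ((-841/211680)*h^7 + (-53/740880)*h^7*s^2 + (-1/10372320)*h^7*s^4 + (-5/168)*c*h^6 + (-1/3528)*c*h^6*s^2 + (-43/504)*c^2*h^5 + (-1/3528)*c^2*h^5*s^2 + (-1/9)*c^3*h^4 + (-1/18)*c^4*h^3) * hs
  · linear_combination ((-61/20160)*h^8 + (-1/11760)*h^8*s^2 + (-1/2963520)*h^8*s^4 + (-841/30240)*c*h^7 + (-53/105840)*c*h^7*s^2 + (-1/1481760)*c*h^7*s^4 + (-5/48)*c^2*h^6 + (-1/1008)*c^2*h^6*s^2 + (-43/216)*c^3*h^5 + (-1/1512)*c^3*h^5*s^2 + (-7/36)*c^4*h^4 + (-7/90)*c^5*h^3) * hs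

private lemma quad_poly (c h : ℝ) (p : Polynomial ℝ) (hp : p.degree ≤ 7) :
    ∫ x in c..(c+h), p.eval x =
      h*((37/135)*p.eval c + (49/135)*p.eval (c+(7-Real.sqrt 7)/14*h)
        + (49/135)*p.eval (c+(1-(7-Real.sqrt 7)/14)*h))
      + 37/270*h*(p.eval (c+h) - p.eval c)
      - 1/180*h^2*(p.derivative.eval (c+h) - p.derivative.eval c) := by
  have hnd : p.natDegree < 8 := by
    have h7 : p.natDegree ≤ 7 := Polynomial.natDegree_le_iff_degree_le.2 (by exact_mod_cast hp)
    omega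
  rw [p.as_sum_range' 8 hnd]
  simp only [Polynomial.eval_finset_sum, Polynomial.eval_monomial, map_sum,
    Polynomial.derivative_monomial, Polynomial.eval_mul, Polynomial.eval_natCast]
  rw [intervalIntegral.integral_finset_sum (fun i _ => (Continuous.intervalIntegrable (by continuity) _ _))]
  rw [Finset.mul_sum, Finset.mul_sum, Finset.mul_sum, ← Finset.sum_sub_distrib,
    ← Finset.sum_sub_distrib, Finset.mul_sum, Finset.mul_sum,
    ← Finset.sum_add_distrib, ← Finset.sum_add_distrib, Finset.mul_sum,
    ← Finset.sum_add_distrib, ← Finset.sum_sub_distrib]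
  refine Finset.sum_congr rfl fun n hn => ?_
  rw [intervalIntegral.integral_const_mul, quad_pow c h n (Finset.mem_range.1 hn)]
  ring

/-- `f : ℝ → ℝ` is a compactly supported `C^k` spline of degree at most `d`
with knots `hℤ`: `f` has compact support, is `k` times continuously differentiable,
and on every knot interval `[i·h, (i+1)·h]` agrees with a polynomial of degree `≤ d`. -/
def IsCompactlySupportedSpline (d k : ℕ) (h : ℝ) (f : ℝ → ℝ) : Prop :=
  HasCompactSupport f ∧ ContDiff ℝ k f ∧
    ∀ i : ℤ, ∃ p : Polynomial ℝ, p.degree ≤ d ∧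
      ∀ x ∈ Set.Icc ((i : ℝ) * h) ((i + 1 : ℝ) * h), f x = p.eval x

/-- The asymptotic three-node-per-element Gaussian rule for C¹ septic splines
with `d₁ = (7 - √7)/14`. -/
theorem stmt_1 (h : ℝ) (hh : 0 < h) (f : ℝ → ℝ)
    (hf : IsCompactlySupportedSpline 7 1 h f) :
    ∫ x, f x = ∑' i : ℤ, h * ((37/135) * f ((i : ℝ) * h)
      + (49/135) * f (((i : ℝ) + (7 - Real.sqrt 7) / 14) * h)
      + (49/135) * f (((i : ℝ) + 1 - (7 - Real.sqrt 7) / 14) * h)) := by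
  obtain ⟨hsupp, hdiff, hpoly⟩ := hf
  set d : ℝ := (7 - Real.sqrt 7) / 14 with hd
  have hs7 : Real.sqrt 7 ^ 2 = 7 := Real.sq_sqrt (by norm_num)
  have hs7n : 0 ≤ Real.sqrt 7 := Real.sqrt_nonneg 7
  have hd0 : 0 ≤ d := by
    have : Real.sqrt 7 ≤ 3 := by nlinarith
    rw [hd]; linarith
  have hd1 : d ≤ 1 := by rw [hd]; nlinarith
  have hcont : Continuous f := hdiff.continuous
  -- pieces
  choose p hdeg heq using hpoly
  -- continuity of deriv outside support: deriv vanishes outside tsupport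
  have hderiv0 : ∀ x : ℝ, x ∉ tsupport f → deriv f x = 0 := by
    intro x hx
    have hev : f =ᶠ[nhds x] (fun _ => (0:ℝ)) := by
      filter_upwards [(isClosed_tsupport f).isOpen_compl.mem_nhds hx] with y hy
      exact image_eq_zero_of_notMem_tsupport hy
    rw [hev.deriv_eq]; simp
  -- deriv at points of an interval equals derivative of the piece
  have hderiv : ∀ i : ℤ, ∀ x ∈ Set.Icc ((i : ℝ) * h) ((i + 1 : ℝ) * h),
      deriv f x = (p i).derivative.eval x := by
    intro i x hx
    have hlt : (i : ℝ) * h < ((i : ℝ) + 1) * h := by nlinarith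
    have hu := uniqueDiffOn_Icc hlt x hx
    have h1 : HasDerivWithinAt f (deriv f x)
        (Set.Icc ((i : ℝ) * h) (((i : ℝ) + 1) * h)) x :=
      ((hdiff.differentiable (by norm_num)).differentiableAt.hasDerivAt).hasDerivWithinAt
    have h2 : HasDerivWithinAt f ((p i).derivative.eval x)
        (Set.Icc ((i : ℝ) * h) (((i : ℝ) + 1) * h)) x :=
      (((p i).hasDerivAt x).hasDerivWithinAt).congr (fun y hy => heq i y hy) (heq i x hx)
    rw [← h1.derivWithin hu, h2.derivWithin hu]
  -- per-interval key identity
  set T : ℤ → ℝ := fun i => h * ((37/135) * f ((i : ℝ) * h)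
      + (49/135) * f (((i : ℝ) + d) * h)
      + (49/135) * f (((i : ℝ) + 1 - d) * h)) with hT
  have key : ∀ i : ℤ, ∫ x in ((i:ℝ)*h)..(((i:ℝ)+1)*h), f x
      = T i + ((37/270*h*(f (((i:ℝ)+1)*h)) - 1/180*h^2*(deriv f (((i:ℝ)+1)*h)))
             - (37/270*h*(f ((i:ℝ)*h)) - 1/180*h^2*(deriv f ((i:ℝ)*h)))) := by
    intro i
    have hle : (i : ℝ) * h ≤ ((i : ℝ) + 1) * h := by nlinarith
    have hIcc := Set.uIcc_of_le hle
    have hmem : ∀ t : ℝ, 0 ≤ t → t ≤ 1 →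
        ((i:ℝ) + t) * h ∈ Set.Icc ((i : ℝ) * h) (((i : ℝ) + 1) * h) := by
      intro t ht0 ht1; constructor <;> nlinarith
    have h0 : (i:ℝ)*h ∈ Set.Icc ((i : ℝ) * h) (((i : ℝ) + 1) * h) := by
      simpa using hmem 0 le_rfl zero_le_one
    have h1' : ((i:ℝ)+1)*h ∈ Set.Icc ((i : ℝ) * h) (((i : ℝ) + 1) * h) := by
      simpa using hmem 1 zero_le_one le_rfl
    have hdm : ((i:ℝ)+d)*h ∈ Set.Icc ((i : ℝ) * h) (((i : ℝ) + 1) * h) := hmem d hd0 hd1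
    have hdm' : ((i:ℝ)+1-d)*h ∈ Set.Icc ((i : ℝ) * h) (((i : ℝ) + 1) * h) := by
      have := hmem (1-d) (by linarith) (by linarith); convert this using 2; ring
    have e1 : ((i:ℝ)+1)*h = (i:ℝ)*h + h := by ring
    have e2 : ((i:ℝ)+d)*h = (i:ℝ)*h + (7 - Real.sqrt 7)/14 * h := by rw [hd]; ring
    have e3 : ((i:ℝ)+1-d)*h = (i:ℝ)*h + (1 - (7 - Real.sqrt 7)/14) * h := by rw [hd]; ring
    calc ∫ x in ((i:ℝ)*h)..(((i:ℝ)+1)*h), f x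
        = ∫ x in ((i:ℝ)*h)..((i:ℝ)*h + h), (p i).eval x := by
          rw [← e1]
          exact intervalIntegral.integral_congr (by rw [hIcc]; exact fun y hy => heq i y hy)
      _ = _ := by
          rw [quad_poly ((i:ℝ)*h) h (p i) (hdeg i)]
          simp only [hT]
          rw [heq i _ h0, heq i _ h1', heq i _ hdm, heq i _ hdm',
            hderiv i _ h0, hderiv i _ h1', e1, e2, e3]
          ring
  -- choose N
  obtain ⟨r, hr⟩ := hsupp.isBounded.subset_ball 0
  obtain ⟨N, hN⟩ := exists_nat_gt (r / h)
  have hsub : tsupport f ⊆ Set.Ioo (-(N:ℝ)*h) ((N:ℝ)*h) := by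
    intro x hx
    have := hr hx
    rw [Metric.mem_ball, Real.dist_eq, sub_zero] at this
    have hrN : r ≤ (N:ℝ)*h := by
      rcases le_or_gt r 0 with h'|h'
      · have : (0:ℝ) ≤ (N:ℝ)*h := by positivity
        linarith
      · have := (div_lt_iff₀ hh).1 hN; linarith
    have := abs_lt.1 (lt_of_lt_of_le this hrN)
    exact ⟨by linarith [this.1], this.2⟩
  have hzero : ∀ x : ℝ, ((N:ℝ)*h ≤ x ∨ x ≤ -(N:ℝ)*h) → f x = 0 ∧ deriv f x = 0 := by
    intro x hx
    have hnm : x ∉ tsupport f := by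
      intro hmem
      have := hsub hmem
      rcases hx with h'|h' <;> [exact absurd this.2 (not_lt.2 h'); exact absurd this.1 (not_lt.2 h')]
    exact ⟨image_eq_zero_of_notMem_tsupport hnm, hderiv0 x hnm⟩
  -- T vanishes outside [-N, N-1]
  have hT0 : ∀ i : ℤ, ((N:ℤ) ≤ i ∨ i + 1 ≤ -(N:ℤ)) → T i = 0 := by
    intro i hi
    have hnode : ∀ t : ℝ, 0 ≤ t → t ≤ 1 → f (((i:ℝ) + t) * h) = 0 := by
      intro t ht0 ht1
      apply (hzero _ ?_).1
      rcases hi with hi|hi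
      · left
        have : (N:ℝ) ≤ (i:ℝ) := by exact_mod_cast hi
        nlinarith
      · right
        have : (i:ℝ) + 1 ≤ -(N:ℝ) := by exact_mod_cast hi
        nlinarith
    simp only [hT]
    have n1 := hnode 0 le_rfl zero_le_one
    have n2 := hnode d hd0 hd1
    have n3 := hnode (1-d) (by linarith) (by linarith)
    simp only [add_zero] at n1
    rw [show ((i:ℝ)+1-d) = ((i:ℝ)+(1-d)) by ring]
    rw [n1, n2, n3]; ring
  -- the index finset
  set emb : ℕ ↪ ℤ := ⟨fun k => -(N:ℤ) + k, by intro a b hab; simp only at hab; omega⟩ with hemb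
  set a : ℕ → ℝ := fun k => ((-(N:ℤ) + k : ℤ) : ℝ) * h with ha
  have hsum : ∑' i : ℤ, T i = ∑ k ∈ Finset.range (2*N), T (-(N:ℤ) + k) := by
    rw [tsum_eq_sum (s := (Finset.range (2*N)).map emb) ?_, Finset.sum_map]
    · rfl
    · intro i hi
      apply hT0
      simp only [Finset.mem_map, Finset.mem_range, hemb] at hi
      by_contra hcon
      push_neg at hcon
      exact hi ⟨(i + N).toNat, by omega, by show -(N:ℤ) + ((i + N).toNat : ℤ) = i; omega⟩
  have hint : ∀ k : ℕ, IntervalIntegrable f volume (a k) (a (k+1)) :=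
    fun k => hcont.intervalIntegrable _ _
  have hadj : ∑ k ∈ Finset.range (2*N), ∫ x in (a k)..(a (k+1)), f x
      = ∫ x in (a 0)..(a (2*N)), f x :=
    intervalIntegral.sum_integral_adjacent_intervals (fun k _ => hint k)
  have hwhole : ∫ x, f x = ∫ x in (a 0)..(a (2*N)), f x := by
    rw [intervalIntegral.integral_eq_integral_of_support_subset]
    have ha0 : a 0 = -(N:ℝ)*h := by rw [ha]; push_cast; ring
    have ha2 : a (2*N) = (N:ℝ)*h := by rw [ha]; push_cast; ring
    rw [ha0, ha2]
    exact (subset_tsupport f).trans (hsub.trans Set.Ioo_subset_Ioc_self)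
  set G : ℕ → ℝ := fun k => 37/270*h*(f (a k)) - 1/180*h^2*(deriv f (a k)) with hG
  have hstep : ∀ k : ℕ, ∫ x in (a k)..(a (k+1)), f x
      = T (-(N:ℤ) + k) + (G (k+1) - G k) := by
    intro k
    have e1 : a k = ((-(N:ℤ)+k : ℤ):ℝ) * h := rfl
    have e2 : a (k+1) = (((-(N:ℤ)+k : ℤ):ℝ) + 1) * h := by simp only [ha]; push_cast; ring
    simp only [hG]
    rw [e1, e2, key (-(N:ℤ)+k)]
  have hG0 : G 0 = 0 := by
    have ha0 : a 0 = -(N:ℝ)*h := by rw [ha]; push_cast; ring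
    obtain ⟨z1, z2⟩ := hzero (a 0) (Or.inr (le_of_eq ha0))
    simp only [hG]; rw [z1, z2]; ring
  have hG2N : G (2*N) = 0 := by
    have ha2 : a (2*N) = (N:ℝ)*h := by rw [ha]; push_cast; ring
    obtain ⟨z1, z2⟩ := hzero (a (2*N)) (Or.inl (ge_of_eq ha2))
    simp only [hG]; rw [z1, z2]; ring
  calc ∫ x, f x = ∫ x in (a 0)..(a (2*N)), f x := hwhole
    _ = ∑ k ∈ Finset.range (2*N), ∫ x in (a k)..(a (k+1)), f x := hadj.symm
    _ = ∑ k ∈ Finset.range (2*N), (T (-(N:ℤ) + k) + (G (k+1) - G k)) :=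
        Finset.sum_congr rfl fun k _ => hstep k
    _ = (∑ k ∈ Finset.range (2*N), T (-(N:ℤ) + k)) + (G (2*N) - G 0) := by
        rw [Finset.sum_add_distrib, Finset.sum_range_sub]
    _ = ∑' i : ℤ, T i := by rw [hG0, hG2N, hsum]; ring

end QuadAux
end

section
/- Let h > 0. For every compactly supported C¹ spline f of degree at most 5 with knots hℤ, the integral of f over ℝ equals Σ_{i∈ℤ} h·( (7/15)·f(ih) + (8/15)·f((i+1/2)h) ). -/
open MeasureTheory

open Polynomial intervalIntegral in

lemma quintic_rule (p : Polynomial ℝ) (hp : p.degree ≤ 5) (a h : ℝ) :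
    ∫ x in a..(a+h), p.eval x
      = h * (7/30 * p.eval a + 8/15 * p.eval (a + h/2) + 7/30 * p.eval (a+h))
        - h^2/60 * (p.derivative.eval (a+h) - p.derivative.eval a) := by
  have hnd : p.natDegree < 6 :=
    Nat.lt_succ_of_le (Polynomial.natDegree_le_iff_degree_le.mpr hp)
  have hnd' : p.derivative.natDegree < 5 :=
    Nat.lt_succ_of_le ((Polynomial.natDegree_derivative_le p).trans (by omega))
  have heval : ∀ x : ℝ, p.eval x = ∑ j ∈ Finset.range 6, p.coeff j * x ^ j :=
    fun x => Polynomial.eval_eq_sum_range' hnd x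
  have heval' : ∀ x : ℝ, p.derivative.eval x
      = ∑ j ∈ Finset.range 5, (j+1 : ℝ) * p.coeff (j+1) * x ^ j := by
    intro x
    rw [Polynomial.eval_eq_sum_range' hnd' x]
    refine Finset.sum_congr rfl fun j _ => ?_
    rw [Polynomial.coeff_derivative]; push_cast; ring
  have hint : ∫ x in a..(a+h), p.eval x
      = ∑ j ∈ Finset.range 6, p.coeff j * (((a+h) ^ (j+1) - a ^ (j+1)) / (j+1)) := by
    rw [intervalIntegral.integral_congr (g := fun x => ∑ j ∈ Finset.range 6, p.coeff j * x ^ j)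
      (fun x _ => heval x)]
    rw [intervalIntegral.integral_finset_sum]
    · refine Finset.sum_congr rfl fun j _ => ?_
      rw [intervalIntegral.integral_const_mul, integral_pow]
    · intro j _
      exact (continuous_const.mul (continuous_pow j)).intervalIntegrable _ _
  rw [hint, heval, heval, heval, heval', heval']
  simp [Finset.sum_range_succ]
  ring

open Polynomial intervalIntegral in
lemma elem_rule (h : ℝ) (hh : 0 < h) (f : ℝ → ℝ) (hd : ContDiff ℝ 1 f)
    (i : ℤ) (p : Polynomial ℝ) (hp : p.degree ≤ 5)
    (heq : ∀ x ∈ Set.Icc ((i : ℝ) * h) ((i + 1 : ℝ) * h), f x = p.eval x) :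
    ∫ x in ((i:ℝ)*h)..(((i:ℝ)+1)*h), f x
      = h * (7/30 * f ((i:ℝ)*h) + 8/15 * f (((i:ℝ) + 1/2) * h) + 7/30 * f (((i:ℝ)+1)*h))
        - h^2/60 * (deriv f (((i:ℝ)+1)*h) - deriv f ((i:ℝ)*h)) := by
  set a : ℝ := (i:ℝ) * h with ha
  have hb : ((i:ℝ)+1) * h = a + h := by ring
  have hab : a < a + h := by linarith
  have heq' : ∀ x ∈ Set.Icc a (a+h), f x = p.eval x := by
    intro x hx; exact heq x (by rwa [hb])
  -- deriv f agrees with polynomial derivative at points of Icc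
  have hderiv : ∀ x ∈ Set.Icc a (a+h), deriv f x = p.derivative.eval x := by
    intro x hx
    have hu : UniqueDiffWithinAt ℝ (Set.Icc a (a+h)) x := uniqueDiffOn_Icc hab x hx
    have h1 : HasDerivWithinAt f (deriv f x) (Set.Icc a (a+h)) x :=
      ((hd.differentiable one_ne_zero x).hasDerivAt).hasDerivWithinAt
    have h2 : HasDerivWithinAt f (p.derivative.eval x) (Set.Icc a (a+h)) x :=
      ((p.hasDerivAt x).hasDerivWithinAt).congr (fun y hy => heq' y hy) (heq' x hx)
    exact (h1.derivWithin hu).symm.trans (h2.derivWithin hu)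
  have hmid : ((i:ℝ) + 1/2) * h = a + h/2 := by ring
  rw [hb, hmid]
  rw [intervalIntegral.integral_congr (g := fun x => p.eval x)
    (fun x hx => heq' x (by rwa [Set.uIcc_of_le hab.le] at hx))]
  rw [quintic_rule p hp a h,
    heq' a (by constructor <;> linarith),
    heq' (a + h/2) (by constructor <;> linarith),
    heq' (a + h) (by constructor <;> linarith),
    hderiv a (by constructor <;> linarith),
    hderiv (a + h) (by constructor <;> linarith)]

/-- The asymptotic two-node-per-element Gaussian rule for C¹ quintic splines:
nodes at the knots and element midpoints, weights 7/15 and 8/15. -/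
theorem stmt_2 (h : ℝ) (hh : 0 < h) (f : ℝ → ℝ)
    (hf : IsCompactlySupportedSpline 5 1 h f) :
    ∫ x, f x = ∑' i : ℤ, h * ((7/15) * f ((i : ℝ) * h)
      + (8/15) * f (((i : ℝ) + 1/2) * h)) := by
  obtain ⟨hsupp, hcd, hpoly⟩ := hf
  have hcont : Continuous f := hcd.continuous
  -- choose n with tsupport f ⊆ Ioo (-n h) (n h)
  obtain ⟨R, hR⟩ := (hsupp.isBounded).subset_closedBall 0
  obtain ⟨n, hn⟩ := exists_nat_gt (R / h)
  have hRn : R < (n : ℝ) * h := by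
    rw [div_lt_iff₀ hh] at hn; linarith
  have hts : tsupport f ⊆ Set.Ioo (-((n:ℝ)*h)) ((n:ℝ)*h) := by
    intro x hx
    have := hR hx
    rw [Metric.mem_closedBall, Real.dist_eq, sub_zero] at this
    have := abs_le.mp this
    constructor <;> [linarith; linarith]
  have fz : ∀ x : ℝ, ((n:ℝ)*h ≤ x ∨ x ≤ -((n:ℝ)*h)) → f x = 0 := by
    intro x hx
    apply image_eq_zero_of_notMem_tsupport
    intro hmem
    rcases hts hmem with ⟨h1, h2⟩
    rcases hx with hx | hx <;> linarith
  have dz : ∀ x : ℝ, ((n:ℝ)*h ≤ x ∨ x ≤ -((n:ℝ)*h)) → deriv f x = 0 := by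
    intro x hx
    have hnm : x ∉ tsupport f := by
      intro hmem; rcases hts hmem with ⟨h1, h2⟩; rcases hx with hx | hx <;> linarith
    have hev : f =ᶠ[nhds x] (fun _ => (0:ℝ)) := by
      have : ∀ᶠ y in nhds x, y ∈ (tsupport f)ᶜ :=
        (isClosed_tsupport f).isOpen_compl.mem_nhds hnm
      filter_upwards [this] with y hy
      exact image_eq_zero_of_notMem_tsupport hy
    rw [hev.deriv_eq, deriv_const]
  set a : ℕ → ℝ := fun k => ((k:ℝ) - n) * h with haa
  have ha0 : a 0 = -((n:ℝ)*h) := by simp only [haa]; push_cast; ring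
  have ham : a (2*n) = (n:ℝ)*h := by simp only [haa]; push_cast; ring
  -- whole integral = interval integral
  have hstep1 : ∫ x, f x = ∫ x in (a 0)..(a (2*n)), f x := by
    rw [intervalIntegral.integral_eq_integral_of_support_subset]
    rw [ha0, ham]
    intro x hx
    have hmem : x ∈ tsupport f := subset_tsupport f hx
    rcases hts hmem with ⟨h1, h2⟩
    exact ⟨by linarith, le_of_lt h2⟩
  have hstep2 : ∫ x in (a 0)..(a (2*n)), f x
      = ∑ k ∈ Finset.range (2*n), ∫ x in (a k)..(a (k+1)), f x :=
    (intervalIntegral.sum_integral_adjacent_intervals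
      (fun k _ => hcont.intervalIntegrable _ _)).symm
  have hstep3 : ∀ k : ℕ, ∫ x in (a k)..(a (k+1)), f x
      = h * (7/30 * f (a k) + 8/15 * f (((k:ℝ) - n + 1/2) * h) + 7/30 * f (a (k+1)))
        - h^2/60 * (deriv f (a (k+1)) - deriv f (a k)) := by
    intro k
    set i : ℤ := (k : ℤ) - n with hi
    have hcast : ((i:ℝ)) = (k:ℝ) - n := by push_cast [hi]; ring
    obtain ⟨p, hp, heq⟩ := hpoly i
    have := elem_rule h hh f hcd i p hp (by push_cast; exact_mod_cast heq)
    have hak : a k = (i:ℝ) * h := by rw [haa, hcast]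
    have hak1 : a (k+1) = ((i:ℝ)+1) * h := by rw [haa, hcast]; push_cast; ring
    rw [hak, hak1, this, hcast]
  -- telescoping
  have hstep4 : ∑ k ∈ Finset.range (2*n), (∫ x in (a k)..(a (k+1)), f x)
      = ∑ k ∈ Finset.range (2*n),
          h * (7/15 * f (a k) + 8/15 * f (((k:ℝ) - n + 1/2) * h)) := by
    have key : ∀ k ∈ Finset.range (2*n), (∫ x in (a k)..(a (k+1)), f x)
        = h * (7/15 * f (a k) + 8/15 * f (((k:ℝ) - n + 1/2) * h))
          + ((7/30 * h * f (a (k+1)) - h^2/60 * deriv f (a (k+1)))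
            - (7/30 * h * f (a k) - h^2/60 * deriv f (a k))) := by
      intro k _
      rw [hstep3 k]; ring
    rw [Finset.sum_congr rfl key, Finset.sum_add_distrib,
      Finset.sum_range_sub (fun k => 7/30 * h * f (a k) - h^2/60 * deriv f (a k))]
    rw [fz (a (2*n)) (by rw [ham]; exact Or.inl le_rfl), fz (a 0) (by rw [ha0]; exact Or.inr le_rfl),
      dz (a (2*n)) (by rw [ham]; exact Or.inl le_rfl), dz (a 0) (by rw [ha0]; exact Or.inr le_rfl)]
    ring
  -- tsum side
  have hG : ∀ i : ℤ, i ∉ Finset.Icc (-(n:ℤ)) ((n:ℤ)-1) →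
      h * ((7/15) * f ((i : ℝ) * h) + (8/15) * f (((i : ℝ) + 1/2) * h)) = 0 := by
    intro i hi
    rw [Finset.mem_Icc, not_and_or, not_le, not_le] at hi
    have h1 : f ((i:ℝ) * h) = 0 := by
      apply fz
      rcases hi with hi | hi
      · right
        have : (i:ℝ) + 1 ≤ -(n:ℝ) := by exact_mod_cast Int.lt_iff_add_one_le.mp hi
        nlinarith
      · left
        have hni : (n:ℤ) ≤ i := by omega
        have : (n:ℝ) ≤ (i:ℝ) := by exact_mod_cast hni
        nlinarith
    have h2 : f (((i:ℝ) + 1/2) * h) = 0 := by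
      apply fz
      rcases hi with hi | hi
      · right
        have : (i:ℝ) + 1 ≤ -(n:ℝ) := by exact_mod_cast Int.lt_iff_add_one_le.mp hi
        nlinarith
      · left
        have hni : (n:ℤ) ≤ i := by omega
        have : (n:ℝ) ≤ (i:ℝ) := by exact_mod_cast hni
        nlinarith
    rw [h1, h2]; ring
  rw [tsum_eq_sum hG]
  rw [hstep1, hstep2, hstep4]
  refine Finset.sum_nbij' (fun k => (k : ℤ) - n) (fun i => (i + n).toNat) ?_ ?_ ?_ ?_ ?_
  · intro k hk
    rw [Finset.mem_range] at hk
    rw [Finset.mem_Icc]; omega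
  · intro i hi
    rw [Finset.mem_Icc] at hi
    rw [Finset.mem_range]; omega
  · intro k hk; rw [Finset.mem_range] at hk; omega
  · intro i hi; rw [Finset.mem_Icc] at hi; omega
  · intro k hk
    have hc : (((k : ℤ) - n : ℤ) : ℝ) = (k:ℝ) - n := by push_cast; ring
    rw [hc, haa]
end

section
/- Let d₁ = (3−√3)/6 and let h > 0. For every compactly supported C¹ spline f of degree at most 9 with knots hℤ, the integral of f over ℝ equals Σ_{i∈ℤ} h·( (19/105)·f(ih) + (32/105)·f((i+1/2)h) + (27/105)·( f((i+d₁)h) + f((i+1−d₁)h) ) ). -/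
open MeasureTheory

lemma key_alg (u hh s c0 c1 c2 c3 c4 c5 c6 c7 c8 c9 : ℝ) (hs : s^2 = 3) :
    c0*((u+hh)^1 - u^1)/1 + c1*((u+hh)^2 - u^2)/2 + c2*((u+hh)^3 - u^3)/3 + c3*((u+hh)^4 - u^4)/4 + c4*((u+hh)^5 - u^5)/5 + c5*((u+hh)^6 - u^6)/6 + c6*((u+hh)^7 - u^7)/7 + c7*((u+hh)^8 - u^8)/8 + c8*((u+hh)^9 - u^9)/9 + c9*((u+hh)^10 - u^10)/10
    = hh*(19/210*((c0 + c1*(u)^1 + c2*(u)^2 + c3*(u)^3 + c4*(u)^4 + c5*(u)^5 + c6*(u)^6 + c7*(u)^7 + c8*(u)^8 + c9*(u)^9) + (c0 + c1*(u+hh)^1 + c2*(u+hh)^2 + c3*(u+hh)^3 + c4*(u+hh)^4 + c5*(u+hh)^5 + c6*(u+hh)^6 + c7*(u+hh)^7 + c8*(u+hh)^8 + c9*(u+hh)^9)) + 32/105*(c0 + c1*(u+hh/2)^1 + c2*(u+hh/2)^2 + c3*(u+hh/2)^3 + c4*(u+hh/2)^4 + c5*(u+hh/2)^5 + c6*(u+hh/2)^6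 + c7*(u+hh/2)^7 + c8*(u+hh/2)^8 + c9*(u+hh/2)^9) + 27/105*((c0 + c1*(u+hh*((3-s)/6))^1 + c2*(u+hh*((3-s)/6))^2 + c3*(u+hh*((3-s)/6))^3 + c4*(u+hh*((3-s)/6))^4 + c5*(u+hh*((3-s)/6))^5 + c6*(u+hh*((3-s)/6))^6 + c7*(u+hh*((3-s)/6))^7 + c8*(u+hh*((3-s)/6))^8 + c9*(u+hh*((3-s)/6))^9) + (c0 + c1*(u+hh*(1-(3-s)/6))^1 + c2*(u+hh*(1-(3-s)/6))^2 + c3*(u+hh*(1-(3-s)/6))^3 + c4*(u+hh*(1-(3-s)/6))^4 + c5*(u+hh*(1-(3-s)/6))^5 + c6*(u+hh*(1-(3-s)/6))^6 + c7*(u+hh*(1-(3-s)/6))^7 + c8*(u+hh*(1-(3-s)/6))^8 + c9*(u+hh*(1-(3-s)/6))^9))) - hh^2/420*((c1 + 2*c2*(u+hh)^1 + 3*c3*(u+hh)^2 + 4*c4*(u+hh)^3 + 5*c5*(u+hh)^4 + 6*c6*(u+hh)^5 + 7*c7*(u+hh)^6 + 8*c8*(u+hh)^7 + 9*c9*(u+hh)^8)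 - (c1 + 2*c2*(u)^1 + 3*c3*(u)^2 + 4*c4*(u)^3 + 5*c5*(u)^4 + 6*c6*(u)^5 + 7*c7*(u)^6 + 8*c8*(u)^7 + 9*c9*(u)^8)) := by
  linear_combination ((-1/70)*hh^3*c2 - (3/140)*hh^4*c3 - (19/840)*hh^5*c4 - (1/2520)*hh^5*s^2*c4 - (1/48)*hh^6*c5 - (1/1008)*hh^6*s^2*c5 - (181/10080)*hh^7*c6 - (23/15120)*hh^7*s^2*c6 - (1/90720)*hh^7*s^4*c6 - (43/2880)*hh^8*c7 - (1/540)*hh^8*s^2*c7 - (1/25920)*hh^8*s^4*c7 - (1471/120960)*hh^9*c8 - (143/72576)*hh^9*s^2*c8 - (17/217728)*hh^9*s^4*c8 - (1/3265920)*hh^9*s^6*c8 - (263/26880)*hh^10*c9 - (31/16128)*hh^10*s^2*c9 - (29/241920)*hh^10*s^4*c9 - (1/725760)*hh^10*s^6*c9 - (3/70)*u*hh^3*c3 - (3/35)*u*hh^4*c4 - (19/168)*u*hh^5*c5 - (1/504)*u*hh^5*s^2*c5 - (1/8)*u*hh^6*c6 - (1/168)*u*hh^6*s^2*c6 - (181/1440)*u*hh^7*c7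 - (23/2160)*u*hh^7*s^2*c7 - (1/12960)*u*hh^7*s^4*c7 - (43/360)*u*hh^8*c8 - (2/135)*u*hh^8*s^2*c8 - (1/3240)*u*hh^8*s^4*c8 - (1471/13440)*u*hh^9*c9 - (143/8064)*u*hh^9*s^2*c9 - (17/24192)*u*hh^9*s^4*c9 - (1/362880)*u*hh^9*s^6*c9 - (3/35)*u^2*hh^3*c4 - (3/14)*u^2*hh^4*c5 - (19/56)*u^2*hh^5*c6 - (1/168)*u^2*hh^5*s^2*c6 - (7/16)*u^2*hh^6*c7 - (1/48)*u^2*hh^6*s^2*c7 - (181/360)*u^2*hh^7*c8 - (23/540)*u^2*hh^7*s^2*c8 - (1/3240)*u^2*hh^7*s^4*c8 - (43/80)*u^2*hh^8*c9 - (1/15)*u^2*hh^8*s^2*c9 - (1/720)*u^2*hh^8*s^4*c9 - (1/7)*u^3*hh^3*c5 - (3/7)*u^3*hh^4*c6 - (19/24)*u^3*hh^5*c7 - (1/72)*u^3*hh^5*s^2*c7 - (7/6)*u^3*hh^6*c8 - (1/18)*u^3*hh^6*s^2*c8 - (181/120)*u^3*hh^7*c9 - (23/180)*u^3*hh^7*s^2*c9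 - (1/1080)*u^3*hh^7*s^4*c9 - (3/14)*u^4*hh^3*c6 - (3/4)*u^4*hh^4*c7 - (19/12)*u^4*hh^5*c8 - (1/36)*u^4*hh^5*s^2*c8 - (21/8)*u^4*hh^6*c9 - (1/8)*u^4*hh^6*s^2*c9 - (3/10)*u^5*hh^3*c7 - (6/5)*u^5*hh^4*c8 - (57/20)*u^5*hh^5*c9 - (1/20)*u^5*hh^5*s^2*c9 - (2/5)*u^6*hh^3*c8 - (9/5)*u^6*hh^4*c9 - (18/35)*u^7*hh^3*c9) * hs

lemma poly_interval (p : Polynomial ℝ) (hdeg : p.degree ≤ 9) (u hh : ℝ) :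
    ∫ x in u..(u+hh), p.eval x
      = hh * (19/210 * (p.eval u + p.eval (u+hh)) + 32/105 * p.eval (u+hh/2)
          + 27/105 * (p.eval (u+hh*((3-Real.sqrt 3)/6)) + p.eval (u+hh*(1-(3-Real.sqrt 3)/6))))
        - hh^2/420 * (p.derivative.eval (u+hh) - p.derivative.eval u) := by
  have hnd9 : p.natDegree ≤ 9 := Polynomial.natDegree_le_iff_degree_le.2 hdeg
  have hnd : p.natDegree < 10 := lt_of_le_of_lt hnd9 (by norm_num)
  have hnd' : (Polynomial.derivative p).natDegree < 9 :=
    lt_of_le_of_lt (Polynomial.natDegree_derivative_le p) (by omega)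
  have h1 : ∀ x : ℝ, p.eval x = ∑ i ∈ Finset.range 10, p.coeff i * x ^ i :=
    fun x => Polynomial.eval_eq_sum_range' hnd x
  have h2 : ∀ x : ℝ, (Polynomial.derivative p).eval x
      = ∑ i ∈ Finset.range 9, p.coeff (i+1) * (i+1) * x ^ i := by
    intro x
    rw [Polynomial.eval_eq_sum_range' hnd' x]
    exact Finset.sum_congr rfl fun i _ => by
      rw [Polynomial.coeff_derivative]; try push_cast; try ring
  have hint : ∫ x in u..(u+hh), p.eval x
      = ∑ i ∈ Finset.range 10, p.coeff i * (((u+hh)^(i+1) - u^(i+1))/(i+1)) := by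
    calc ∫ x in u..(u+hh), p.eval x
        = ∫ x in u..(u+hh), ∑ i ∈ Finset.range 10, p.coeff i * x ^ i := by simp_rw [h1]
      _ = ∑ i ∈ Finset.range 10, ∫ x in u..(u+hh), p.coeff i * x ^ i :=
          intervalIntegral.integral_finset_sum
            (fun i _ => ((continuous_const.mul (continuous_pow i)).intervalIntegrable _ _))
      _ = _ := by
          simp [intervalIntegral.integral_const_mul, integral_pow]
  rw [hint, h1, h1, h1, h1, h1, h2, h2]
  simp only [Finset.sum_range_succ, Finset.sum_range_zero]
  push_cast
  linear_combination key_alg u hh (Real.sqrt 3) (p.coeff 0) (p.coeff 1) (p.coeff 2) (p.coeff 3)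
    (p.coeff 4) (p.coeff 5) (p.coeff 6) (p.coeff 7) (p.coeff 8) (p.coeff 9)
    (Real.sq_sqrt (by norm_num : (3:ℝ) ≥ 0))

lemma sqrt3_bounds : 1 ≤ Real.sqrt 3 ∧ Real.sqrt 3 ≤ 2 := by
  constructor
  · nlinarith [Real.sq_sqrt (by norm_num : (3:ℝ) ≥ 0), Real.sqrt_nonneg 3]
  · nlinarith [Real.sq_sqrt (by norm_num : (3:ℝ) ≥ 0), Real.sqrt_nonneg 3]


lemma interval_formula (h : ℝ) (hh : 0 < h) (f : ℝ → ℝ) (hc : ContDiff ℝ 1 f)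
    (p : Polynomial ℝ) (hdeg : p.degree ≤ 9) (u : ℝ)
    (heq : ∀ x ∈ Set.Icc u (u+h), f x = p.eval x) :
    (∫ x in u..(u+h), f x)
      = h * (19/210 * (f u + f (u+h)) + 32/105 * f (u+h/2)
          + 27/105 * (f (u+h*((3-Real.sqrt 3)/6)) + f (u+h*(1-(3-Real.sqrt 3)/6))))
        - h^2/420 * (deriv f (u+h) - deriv f u) := by
  obtain ⟨hs1, hs2⟩ := sqrt3_bounds
  have hle : u ≤ u + h := by linarith
  have hlt : u < u + h := by linarith
  -- memberships of nodes
  have m0 : u ∈ Set.Icc u (u+h) := by constructor <;> linarith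
  have m1 : u + h ∈ Set.Icc u (u+h) := by constructor <;> linarith
  have m2 : u + h/2 ∈ Set.Icc u (u+h) := by constructor <;> linarith
  have m3 : u + h*((3-Real.sqrt 3)/6) ∈ Set.Icc u (u+h) := by
    constructor <;> nlinarith
  have m4 : u + h*(1-(3-Real.sqrt 3)/6) ∈ Set.Icc u (u+h) := by
    constructor <;> nlinarith
  -- derivative agreement on the closed interval
  have hder : Set.EqOn (deriv f) (fun x => p.derivative.eval x) (Set.Icc u (u+h)) := by
    have hIoo : Set.EqOn (deriv f) (fun x => p.derivative.eval x) (Set.Ioo u (u+h)) := by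
      intro y hy
      have hev : f =ᶠ[nhds y] (fun x => p.eval x) :=
        Filter.eventuallyEq_of_mem (isOpen_Ioo.mem_nhds hy)
          (fun x hx => heq x (Set.Ioo_subset_Icc_self hx))
      rw [hev.deriv_eq, Polynomial.deriv]
    have := hIoo.closure (hc.continuous_deriv le_rfl)
      (p.derivative.continuous_aeval)
    rwa [closure_Ioo hlt.ne] at this
  have hint : (∫ x in u..(u+h), f x) = ∫ x in u..(u+h), p.eval x := by
    apply intervalIntegral.integral_congr
    rwa [Set.uIcc_of_le hle]
  rw [hint, poly_interval p hdeg u h, heq u m0, heq _ m1, heq _ m2, heq _ m3, heq _ m4,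
    hder m1, hder m0]


set_option maxHeartbeats 1000000 in
/-- The asymptotic four-node-per-element Gaussian rule for C¹ nonic splines
with interior node distance `d₁ = (3 - √3)/6`. -/
theorem stmt_3 (h : ℝ) (hh : 0 < h) (f : ℝ → ℝ)
    (hf : IsCompactlySupportedSpline 9 1 h f) :
    ∫ x, f x = ∑' i : ℤ, h * ((19/105) * f ((i : ℝ) * h)
      + (32/105) * f (((i : ℝ) + 1/2) * h)
      + (27/105) * (f (((i : ℝ) + (3 - Real.sqrt 3) / 6) * h)
          + f (((i : ℝ) + 1 - (3 - Real.sqrt 3) / 6) * h))) := by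
  obtain ⟨hsupp, hcd, hpoly⟩ := hf
  have hcont : Continuous f := hcd.continuous
  obtain ⟨hs1, hs2⟩ := sqrt3_bounds
  -- choose N
  obtain ⟨R, hR0, hR⟩ := hsupp.isBounded.subset_ball_lt 0 0
  obtain ⟨N, hN⟩ := exists_nat_gt (R / h)
  have hRN : R < (N:ℝ) * h := by
    rw [div_lt_iff₀ hh] at hN; linarith
  have hfz : ∀ x : ℝ, (x ≤ -((N:ℝ)*h) ∨ (N:ℝ)*h ≤ x) → f x = 0 := by
    intro x hx
    apply image_eq_zero_of_notMem_tsupport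
    intro hmem
    have := hR hmem
    rw [Metric.mem_ball, Real.dist_eq, sub_zero] at this
    rcases hx with hx | hx
    · rcases abs_lt.1 this with ⟨h1, h2⟩; linarith
    · rcases abs_lt.1 this with ⟨h1, h2⟩; linarith
  have hgz : ∀ x : ℝ, (x ≤ -((N:ℝ)*h) ∨ (N:ℝ)*h ≤ x) → deriv f x = 0 := by
    intro x hx
    by_contra hne
    have hmem : x ∈ tsupport f := support_deriv_subset (by simpa using hne)
    have := hR hmem
    rw [Metric.mem_ball, Real.dist_eq, sub_zero] at this
    rcases hx with hx | hx
    · rcases abs_lt.1 this with ⟨h1, h2⟩; linarith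
    · rcases abs_lt.1 this with ⟨h1, h2⟩; linarith
  set T : ℤ → ℝ := fun i => h * ((19/105) * f ((i : ℝ) * h)
      + (32/105) * f (((i : ℝ) + 1/2) * h)
      + (27/105) * (f (((i : ℝ) + (3 - Real.sqrt 3) / 6) * h)
          + f (((i : ℝ) + 1 - (3 - Real.sqrt 3) / 6) * h))) with hT
  set a : ℕ → ℝ := fun k => ((k:ℝ) - N) * h with ha
  have hastep : ∀ k : ℕ, a (k+1) = a k + h := by
    intro k; simp only [ha]; push_cast; ring
  -- per-interval formula
  have hkey : ∀ i : ℤ, (∫ x in ((i:ℝ)*h)..((i:ℝ)*h + h), f x)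
      = h * (19/210 * (f ((i:ℝ)*h) + f ((i:ℝ)*h + h)) + 32/105 * f ((i:ℝ)*h + h/2)
          + 27/105 * (f ((i:ℝ)*h + h*((3-Real.sqrt 3)/6))
              + f ((i:ℝ)*h + h*(1-(3-Real.sqrt 3)/6))))
        - h^2/420 * (deriv f ((i:ℝ)*h + h) - deriv f ((i:ℝ)*h)) := by
    intro i
    obtain ⟨p, hdeg, hp⟩ := hpoly i
    refine interval_formula h hh f hcd p hdeg _ ?_
    intro x hx
    apply hp
    have : ((i:ℝ) + 1) * h = (i:ℝ)*h + h := by ring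
    rw [this]
    exact hx
  -- rewrite per-interval formula in terms of T
  have hkey2 : ∀ k : ℕ, (∫ x in (a k)..(a (k+1)), f x)
      = T ((k:ℤ) - N) + (19/210*h) * (f (a (k+1)) - f (a k))
        - h^2/420 * (deriv f (a (k+1)) - deriv f (a k)) := by
    intro k
    have hik : (((k:ℤ) - (N:ℤ) : ℤ) : ℝ) = (k:ℝ) - N := by push_cast; ring
    have h1 : a k = (((k:ℤ) - (N:ℤ) : ℤ) : ℝ) * h := by rw [hik]
    have h2 := hkey ((k:ℤ) - N)
    rw [hastep k, h1]
    rw [h2, hT]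
    have e1 : ((((k:ℤ) - (N:ℤ) : ℤ) : ℝ) + 1/2) * h
        = (((k:ℤ) - (N:ℤ) : ℤ) : ℝ) * h + h/2 := by ring
    have e2 : ((((k:ℤ) - (N:ℤ) : ℤ) : ℝ) + (3 - Real.sqrt 3)/6) * h
        = (((k:ℤ) - (N:ℤ) : ℤ) : ℝ) * h + h*((3-Real.sqrt 3)/6) := by ring
    have e3 : ((((k:ℤ) - (N:ℤ) : ℤ) : ℝ) + 1 - (3 - Real.sqrt 3)/6) * h
        = (((k:ℤ) - (N:ℤ) : ℤ) : ℝ) * h + h*(1-(3-Real.sqrt 3)/6) := by ring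
    simp only [e1, e2, e3]
    ring
  -- integral over ℝ equals integral over [a 0, a (2N)]
  have ha0 : a 0 = -((N:ℝ)*h) := by simp [ha]
  have ha2N : a (2*N) = (N:ℝ)*h := by simp only [ha]; push_cast; ring
  have hle : a 0 ≤ a (2*N) := by
    rw [ha0, ha2N]
    have : (0:ℝ) ≤ (N:ℝ)*h := by positivity
    linarith
  have hint1 : ∫ x, f x = ∫ x in (a 0)..(a (2*N)), f x := by
    rw [intervalIntegral.integral_of_le hle]
    refine (setIntegral_eq_integral_of_forall_compl_eq_zero ?_).symm
    intro x hx
    rw [Set.mem_Ioc, not_and_or, not_lt, not_le] at hx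
    rcases hx with hx | hx
    · exact hfz x (Or.inl (by rw [← ha0]; exact hx))
    · exact hfz x (Or.inr (by rw [← ha2N]; exact hx.le))
  have hint2 : (∑ k ∈ Finset.range (2*N), ∫ x in (a k)..(a (k+1)), f x)
      = ∫ x in (a 0)..(a (2*N)), f x :=
    intervalIntegral.sum_integral_adjacent_intervals
      (fun k _ => hcont.intervalIntegrable _ _)
  -- telescoping
  have htel1 : (∑ k ∈ Finset.range (2*N), (f (a (k+1)) - f (a k)))
      = f (a (2*N)) - f (a 0) := Finset.sum_range_sub (fun k => f (a k)) (2*N)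
  have htel2 : (∑ k ∈ Finset.range (2*N), (deriv f (a (k+1)) - deriv f (a k)))
      = deriv f (a (2*N)) - deriv f (a 0) :=
    Finset.sum_range_sub (fun k => deriv f (a k)) (2*N)
  have hfa0 : f (a 0) = 0 := hfz _ (Or.inl (by rw [ha0]))
  have hfa2 : f (a (2*N)) = 0 := hfz _ (Or.inr (by rw [ha2N]))
  have hga0 : deriv f (a 0) = 0 := hgz _ (Or.inl (by rw [ha0]))
  have hga2 : deriv f (a (2*N)) = 0 := hgz _ (Or.inr (by rw [ha2N]))
  -- the sum of T over the relevant finite set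
  have hsumT : (∑ k ∈ Finset.range (2*N), ∫ x in (a k)..(a (k+1)), f x)
      = ∑ k ∈ Finset.range (2*N), T ((k:ℤ) - N) := by
    calc (∑ k ∈ Finset.range (2*N), ∫ x in (a k)..(a (k+1)), f x)
        = ∑ k ∈ Finset.range (2*N), (T ((k:ℤ) - N)
            + (19/210*h) * (f (a (k+1)) - f (a k))
            - h^2/420 * (deriv f (a (k+1)) - deriv f (a k))) :=
          Finset.sum_congr rfl (fun k _ => hkey2 k)
      _ = (∑ k ∈ Finset.range (2*N), T ((k:ℤ) - N))
            + (19/210*h) * (∑ k ∈ Finset.range (2*N), (f (a (k+1)) - f (a k)))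
            - h^2/420 * (∑ k ∈ Finset.range (2*N), (deriv f (a (k+1)) - deriv f (a k))) := by
          rw [Finset.mul_sum, Finset.mul_sum, ← Finset.sum_add_distrib, ← Finset.sum_sub_distrib]
      _ = ∑ k ∈ Finset.range (2*N), T ((k:ℤ) - N) := by
          rw [htel1, htel2, hfa0, hfa2, hga0, hga2]; ring
  -- tsum equals the finite sum
  have hTzero : ∀ i : ℤ, i ∉ Finset.Icc (-(N:ℤ)) ((N:ℤ)-1) → T i = 0 := by
    intro i hi
    rw [Finset.mem_Icc, not_and_or, not_le, not_le] at hi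
    have hd1a : (0:ℝ) ≤ (3 - Real.sqrt 3)/6 := by linarith
    have hd1b : (3 - Real.sqrt 3)/6 ≤ 1 := by linarith
    rcases hi with hi | hi
    · -- i + 1 ≤ -N : all nodes ≤ (i+1) h ≤ -N h
      have hile : (i:ℝ) + 1 ≤ -(N:ℝ) := by
        have : i + 1 ≤ -(N:ℤ) := by omega
        exact_mod_cast this
      have mono : ∀ y : ℝ, y ≤ -(N:ℝ) → y * h ≤ -((N:ℝ)*h) := by
        intro y hy
        have := mul_le_mul_of_nonneg_right hy hh.le
        linarith [this]
      have z1 : f ((i:ℝ)*h) = 0 := hfz _ (Or.inl (mono _ (by linarith)))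
      have z2 : f (((i:ℝ) + 1/2)*h) = 0 := hfz _ (Or.inl (mono _ (by linarith)))
      have z3 : f (((i:ℝ) + (3 - Real.sqrt 3)/6)*h) = 0 := hfz _ (Or.inl (mono _ (by linarith)))
      have z4 : f (((i:ℝ) + 1 - (3 - Real.sqrt 3)/6)*h) = 0 := hfz _ (Or.inl (mono _ (by linarith)))
      rw [hT]; simp only [z1, z2, z3, z4]; ring
    · -- N ≤ i : all nodes ≥ i h ≥ N h
      have hile : (N:ℝ) ≤ (i:ℝ) := by
        have : (N:ℤ) ≤ i := by omega
        exact_mod_cast this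
      have mono : ∀ y : ℝ, (N:ℝ) ≤ y → (N:ℝ)*h ≤ y * h := fun y hy =>
        mul_le_mul_of_nonneg_right hy hh.le
      have z1 : f ((i:ℝ)*h) = 0 := hfz _ (Or.inr (mono _ (by linarith)))
      have z2 : f (((i:ℝ) + 1/2)*h) = 0 := hfz _ (Or.inr (mono _ (by linarith)))
      have z3 : f (((i:ℝ) + (3 - Real.sqrt 3)/6)*h) = 0 := hfz _ (Or.inr (mono _ (by linarith)))
      have z4 : f (((i:ℝ) + 1 - (3 - Real.sqrt 3)/6)*h) = 0 := hfz _ (Or.inr (mono _ (by linarith)))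
      rw [hT]; simp only [z1, z2, z3, z4]; ring
  have htsum : (∑' i : ℤ, T i) = ∑ i ∈ Finset.Icc (-(N:ℤ)) ((N:ℤ)-1), T i :=
    tsum_eq_sum hTzero
  have hbij : (∑ i ∈ Finset.Icc (-(N:ℤ)) ((N:ℤ)-1), T i)
      = ∑ k ∈ Finset.range (2*N), T ((k:ℤ) - N) := by
    refine Finset.sum_nbij' (i := fun i => (i + N).toNat) (j := fun k => (k:ℤ) - N)
      ?_ ?_ ?_ ?_ ?_
    · intro i hi
      rw [Finset.mem_Icc] at hi
      rw [Finset.mem_range]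
      omega
    · intro k hk
      rw [Finset.mem_range] at hk
      rw [Finset.mem_Icc]
      omega
    · intro i hi
      rw [Finset.mem_Icc] at hi
      omega
    · intro k hk
      rw [Finset.mem_range] at hk
      omega
    · intro i hi
      rw [Finset.mem_Icc] at hi
      congr 1
      omega
  rw [hint1, ← hint2, hsumT, htsum, hbij]
end

section
/- Let d₁ = (15−√165)/30, d₂ = (5−√5)/10, and let h > 0. For every compactly supported continuous (C⁰) spline f of degree at most 5 with knots hℤ, the integral of f over ℝ equals Σ_{i∈ℤ} h·( (45/132)·( f((2i+d₁)h) + f((2i+1−d₁)h) ) + (64/132)·f((2i+1/2)h) + (55/132)·( f((2i+1+d₂)h) + f((2i+2−d₂)h) ) ). -/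
open MeasureTheory

open intervalIntegral

lemma elemA (c h : ℝ) (p : Polynomial ℝ) (hp : p.natDegree < 6) :
    (∫ x in (c*h)..((c+1)*h), p.eval x)
      = h * ((45/132) * (p.eval ((c + (15 - Real.sqrt 165)/30) * h)
            + p.eval ((c + 1 - (15 - Real.sqrt 165)/30) * h))
          + (64/132) * p.eval ((c + 1/2) * h))
        - h/12 * (p.eval (c*h) + p.eval ((c+1)*h)) := by
  obtain ⟨t, ht, hd⟩ : ∃ t : ℝ, t^2 = 11/60 ∧ (15 - Real.sqrt 165)/30 = 1/2 - t := by
    refine ⟨Real.sqrt 165 / 30, ?_, by ring⟩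
    rw [div_pow, Real.sq_sqrt (by norm_num : (165:ℝ) ≥ 0)]
    norm_num
  rw [hd]
  simp only [Polynomial.eval_eq_sum_range' hp]
  rw [intervalIntegral.integral_finset_sum (f := fun j x => p.coeff j * x ^ j)
    (fun j _ => ((continuous_const.mul (continuous_pow j)).intervalIntegrable _ _))]
  simp only [intervalIntegral.integral_const_mul, integral_pow]
  simp only [Finset.sum_range_succ, Finset.sum_range_zero]
  push_cast
  linear_combination ((-15/22:ℝ)*h^3*p.coeff 2 + (-45/44:ℝ)*h^4*p.coeff 3 + (-101/88:ℝ)*h^5*p.coeff 4 + (-15/22:ℝ)*h^5*t^2*p.coeff 4 + (-205/176:ℝ)*h^6*p.coeff 5 + (-75/44:ℝ)*h^6*t^2*p.coeff 5 + (-45/22:ℝ)*c*h^4*p.coeff 3 + (-45/11:ℝ)*c*h^5*p.coeff 4 + (-505/88:ℝ)*c*h^6*p.coeff 5 + (-75/22:ℝ)*c*h^6*t^2*p.coeff 5 + (-45/11:ℝ)*c^2*h^5*p.coeff 4 + (-225/22:ℝ)*c^2*h^6*p.coeff 5 + (-75/11:ℝ)*c^3*h^6*p.coeff 5) * ht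

lemma elemB (c h : ℝ) (p : Polynomial ℝ) (hp : p.natDegree < 6) :
    (∫ x in ((c+1)*h)..((c+2)*h), p.eval x)
      = h * ((55/132) * (p.eval ((c + 1 + (5 - Real.sqrt 5)/10) * h)
            + p.eval ((c + 2 - (5 - Real.sqrt 5)/10) * h)))
        + h/12 * (p.eval ((c+1)*h) + p.eval ((c+2)*h)) := by
  obtain ⟨t, ht, hd⟩ : ∃ t : ℝ, t^2 = 1/20 ∧ (5 - Real.sqrt 5)/10 = 1/2 - t := by
    refine ⟨Real.sqrt 5 / 10, ?_, by ring⟩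
    rw [div_pow, Real.sq_sqrt (by norm_num : (5:ℝ) ≥ 0)]
    norm_num
  rw [hd]
  simp only [Polynomial.eval_eq_sum_range' hp]
  rw [intervalIntegral.integral_finset_sum (f := fun j x => p.coeff j * x ^ j)
    (fun j _ => ((continuous_const.mul (continuous_pow j)).intervalIntegrable _ _))]
  simp only [intervalIntegral.integral_const_mul, integral_pow]
  simp only [Finset.sum_range_succ, Finset.sum_range_zero]
  push_cast
  linear_combination ((-5/6:ℝ)*h^3*p.coeff 2 + (-15/4:ℝ)*h^4*p.coeff 3 + (-271/24:ℝ)*h^5*p.coeff 4 + (-5/6:ℝ)*h^5*t^2*p.coeff 4 + (-455/16:ℝ)*h^6*p.coeff 5 + (-25/4:ℝ)*h^6*t^2*p.coeff 5 + (-5/2:ℝ)*c*h^4*p.coeff 3 + (-15:ℝ)*c*h^5*p.coeff 4 + (-1355/24:ℝ)*c*h^6*p.coeff 5 + (-25/6:ℝ)*c*h^6*t^2*p.coeff 5 + (-5:ℝ)*c^2*h^5*p.coeff 4 + (-75/2:ℝ)*c^2*h^6*p.coeff 5 + (-25/3:ℝ)*c^3*h^6*p.coeff 5) * ht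

/-- The asymptotic 2.5-node-per-element Gaussian rule for C⁰ quintic splines with
`d₁ = (15 - √165)/30` and `d₂ = (5 - √5)/10`. -/
theorem stmt_4 (h : ℝ) (hh : 0 < h) (f : ℝ → ℝ)
    (hf : IsCompactlySupportedSpline 5 0 h f) :
    ∫ x, f x = ∑' i : ℤ,
      h * ((45/132) * (f ((2 * (i : ℝ) + (15 - Real.sqrt 165) / 30) * h)
              + f ((2 * (i : ℝ) + 1 - (15 - Real.sqrt 165) / 30) * h))
        + (64/132) * f ((2 * (i : ℝ) + 1/2) * h)
        + (55/132) * (f ((2 * (i : ℝ) + 1 + (5 - Real.sqrt 5) / 10) * h)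
              + f ((2 * (i : ℝ) + 2 - (5 - Real.sqrt 5) / 10) * h))) := by
  obtain ⟨hsupp, hcont0, hpoly⟩ := hf
  have hc : Continuous f := hcont0.continuous
  have hs165 : Real.sqrt 165 ≤ 15 := by
    rw [show (15:ℝ) = Real.sqrt 225 by
      rw [show (225:ℝ) = 15^2 by norm_num, Real.sqrt_sq (by norm_num : (0:ℝ) ≤ 15)]]
    exact Real.sqrt_le_sqrt (by norm_num)
  have hs5 : Real.sqrt 5 ≤ 5 :=
    le_trans (Real.sqrt_le_sqrt (by norm_num : (5:ℝ) ≤ 25))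
      (le_of_eq (by rw [show (25:ℝ) = 5^2 by norm_num, Real.sqrt_sq (by norm_num : (0:ℝ) ≤ 5)]))
  have hs165' : (0:ℝ) ≤ Real.sqrt 165 := Real.sqrt_nonneg _
  have hs5' : (0:ℝ) ≤ Real.sqrt 5 := Real.sqrt_nonneg _
  -- support bound
  obtain ⟨r, hr⟩ := (Metric.isBounded_iff_subset_closedBall 0).1 hsupp.isCompact.isBounded
  obtain ⟨N, hN⟩ := exists_nat_gt (r / (2*h))
  have hNh : r < 2*(N:ℝ)*h := by
    rw [div_lt_iff₀ (by positivity)] at hN; linarith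
  have hzero : ∀ x : ℝ, 2*(N:ℝ)*h ≤ |x| → f x = 0 := by
    intro x hx
    apply image_eq_zero_of_notMem_tsupport
    intro hmem
    have := hr hmem
    rw [Metric.mem_closedBall, Real.dist_eq, sub_zero] at this
    linarith
  -- the pair identity
  have Hpair : ∀ i : ℤ,
      (∫ x in ((2*(i:ℝ))*h)..((2*(i:ℝ)+2)*h), f x)
        = h * ((45/132) * (f ((2 * (i : ℝ) + (15 - Real.sqrt 165) / 30) * h)
              + f ((2 * (i : ℝ) + 1 - (15 - Real.sqrt 165) / 30) * h))
          + (64/132) * f ((2 * (i : ℝ) + 1/2) * h)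
          + (55/132) * (f ((2 * (i : ℝ) + 1 + (5 - Real.sqrt 5) / 10) * h)
              + f ((2 * (i : ℝ) + 2 - (5 - Real.sqrt 5) / 10) * h)))
          - h/12 * f ((2*(i:ℝ))*h) + h/12 * f ((2*(i:ℝ)+2)*h) := by
    intro i
    have hIcc : ∀ A B t : ℝ, A ≤ t → t ≤ B → t*h ∈ Set.Icc (A*h) (B*h) := fun A B t h1 h2 =>
      ⟨mul_le_mul_of_nonneg_right h1 hh.le, mul_le_mul_of_nonneg_right h2 hh.le⟩
    obtain ⟨p, hpd, hpf⟩ := hpoly (2*i)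
    obtain ⟨q, hqd, hqf⟩ := hpoly (2*i+1)
    have hpn : p.natDegree < 6 := Nat.lt_succ_of_le (Polynomial.natDegree_le_iff_degree_le.2 hpd)
    have hqn : q.natDegree < 6 := Nat.lt_succ_of_le (Polynomial.natDegree_le_iff_degree_le.2 hqd)
    have hpf' : ∀ x ∈ Set.Icc ((2*(i:ℝ))*h) ((2*(i:ℝ)+1)*h), f x = p.eval x := by
      intro x hx
      apply hpf
      simp only [Set.mem_Icc] at hx ⊢
      push_cast
      exact ⟨by linarith [hx.1], by linarith [hx.2]⟩
    have hqf' : ∀ x ∈ Set.Icc ((2*(i:ℝ)+1)*h) ((2*(i:ℝ)+2)*h), f x = q.eval x := by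
      intro x hx
      apply hqf
      simp only [Set.mem_Icc] at hx ⊢
      push_cast
      exact ⟨by linarith [hx.1], by linarith [hx.2]⟩
    have eA := elemA (2*(i:ℝ)) h p hpn
    have eB := elemB (2*(i:ℝ)) h q hqn
    have congA : (∫ x in ((2*(i:ℝ))*h)..((2*(i:ℝ)+1)*h), f x)
        = ∫ x in ((2*(i:ℝ))*h)..((2*(i:ℝ)+1)*h), p.eval x := by
      apply intervalIntegral.integral_congr
      intro x hx
      apply hpf'
      rwa [Set.uIcc_of_le (mul_le_mul_of_nonneg_right (by linarith) hh.le)] at hx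
    have congB : (∫ x in ((2*(i:ℝ)+1)*h)..((2*(i:ℝ)+2)*h), f x)
        = ∫ x in ((2*(i:ℝ)+1)*h)..((2*(i:ℝ)+2)*h), q.eval x := by
      apply intervalIntegral.integral_congr
      intro x hx
      apply hqf'
      rwa [Set.uIcc_of_le (mul_le_mul_of_nonneg_right (by linarith) hh.le)] at hx
    rw [← congA] at eA
    rw [← congB] at eB
    rw [← hpf' ((2*(i:ℝ) + (15 - Real.sqrt 165)/30) * h)
      (hIcc _ _ _ (by linarith) (by linarith))] at eA
    rw [← hpf' ((2*(i:ℝ) + 1 - (15 - Real.sqrt 165)/30) * h)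
      (hIcc _ _ _ (by linarith) (by linarith))] at eA
    rw [← hpf' ((2*(i:ℝ) + 1/2) * h)
      (hIcc _ _ _ (by linarith) (by linarith))] at eA
    rw [← hpf' ((2*(i:ℝ))*h) (hIcc _ _ _ (by linarith) (by linarith))] at eA
    rw [← hpf' ((2*(i:ℝ)+1)*h) (hIcc _ _ _ (by linarith) (by linarith))] at eA
    rw [← hqf' ((2*(i:ℝ) + 1 + (5 - Real.sqrt 5)/10) * h)
      (hIcc _ _ _ (by linarith) (by linarith))] at eB
    rw [← hqf' ((2*(i:ℝ) + 2 - (5 - Real.sqrt 5)/10) * h)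
      (hIcc _ _ _ (by linarith) (by linarith))] at eB
    rw [← hqf' ((2*(i:ℝ)+1)*h) (hIcc _ _ _ (by linarith) (by linarith))] at eB
    rw [← hqf' ((2*(i:ℝ)+2)*h) (hIcc _ _ _ (by linarith) (by linarith))] at eB
    have hsplit : (∫ x in ((2*(i:ℝ))*h)..((2*(i:ℝ)+1)*h), f x)
        + (∫ x in ((2*(i:ℝ)+1)*h)..((2*(i:ℝ)+2)*h), f x)
        = ∫ x in ((2*(i:ℝ))*h)..((2*(i:ℝ)+2)*h), f x :=
      intervalIntegral.integral_add_adjacent_intervals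
        (hc.intervalIntegrable ((2*(i:ℝ))*h) ((2*(i:ℝ)+1)*h))
        (hc.intervalIntegrable ((2*(i:ℝ)+1)*h) ((2*(i:ℝ)+2)*h))
    rw [← hsplit, eA, eB]
    ring
  -- vanishing of terms far away
  have hvan : ∀ (t : ℝ), 0 ≤ t → t ≤ 2 → ∀ i : ℤ, (i < -(N:ℤ) ∨ (N:ℤ) ≤ i) →
      f ((2*(i:ℝ) + t)*h) = 0 := by
    intro t h0 h2 i hi
    apply hzero
    rw [le_abs]
    rcases hi with hi | hi
    · right
      have hi' : (i:ℝ) + 1 ≤ -(N:ℝ) := by exact_mod_cast hi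
      calc 2*(N:ℝ)*h ≤ (-(2*(i:ℝ)+t))*h := mul_le_mul_of_nonneg_right (by linarith) hh.le
        _ = -((2*(i:ℝ)+t)*h) := by ring
    · left
      have hi' : (N:ℝ) ≤ (i:ℝ) := by exact_mod_cast hi
      exact mul_le_mul_of_nonneg_right (by linarith) hh.le
  have hTzero : ∀ i : ℤ, i ∉ Finset.Icc (-(N:ℤ)) ((N:ℤ)-1) →
      h * ((45/132) * (f ((2 * (i : ℝ) + (15 - Real.sqrt 165) / 30) * h)
              + f ((2 * (i : ℝ) + 1 - (15 - Real.sqrt 165) / 30) * h))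
        + (64/132) * f ((2 * (i : ℝ) + 1/2) * h)
        + (55/132) * (f ((2 * (i : ℝ) + 1 + (5 - Real.sqrt 5) / 10) * h)
              + f ((2 * (i : ℝ) + 2 - (5 - Real.sqrt 5) / 10) * h))) = 0 := by
    intro i hi
    simp only [Finset.mem_Icc, not_and, not_le] at hi
    have hi' : i < -(N:ℤ) ∨ (N:ℤ) ≤ i := by omega
    have z1 := hvan ((15 - Real.sqrt 165)/30) (by linarith) (by linarith) i hi'
    have z2 : f ((2 * (i : ℝ) + 1 - (15 - Real.sqrt 165) / 30) * h) = 0 := by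
      rw [show (2 * (i : ℝ) + 1 - (15 - Real.sqrt 165) / 30)
          = 2 * (i:ℝ) + (1 - (15 - Real.sqrt 165) / 30) from by ring]
      exact hvan _ (by linarith) (by linarith) i hi'
    have z3 := hvan (1/2 : ℝ) (by norm_num) (by norm_num) i hi'
    have z4 : f ((2 * (i : ℝ) + 1 + (5 - Real.sqrt 5) / 10) * h) = 0 := by
      rw [show (2 * (i : ℝ) + 1 + (5 - Real.sqrt 5) / 10)
          = 2 * (i:ℝ) + (1 + (5 - Real.sqrt 5) / 10) from by ring]
      exact hvan _ (by linarith) (by linarith) i hi'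
    have z5 : f ((2 * (i : ℝ) + 2 - (5 - Real.sqrt 5) / 10) * h) = 0 := by
      rw [show (2 * (i : ℝ) + 2 - (5 - Real.sqrt 5) / 10)
          = 2 * (i:ℝ) + (2 - (5 - Real.sqrt 5) / 10) from by ring]
      exact hvan _ (by linarith) (by linarith) i hi'
    rw [z1, z2, z3, z4, z5]
    ring
  rw [tsum_eq_sum hTzero]
  -- setup partition
  set a : ℕ → ℝ := fun k => (2*((k:ℝ) - (N:ℝ)))*h with ha
  have ha0 : a 0 = -(2*(N:ℝ)*h) := by simp only [ha]; push_cast; ring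
  have haN : a (2*N) = 2*(N:ℝ)*h := by simp only [ha]; push_cast; ring
  have hM0 : (0:ℝ) ≤ 2*(N:ℝ)*h := by positivity
  have step1 : ∫ x, f x = ∫ x in (a 0)..(a (2*N)), f x := by
    rw [ha0, haN, intervalIntegral.integral_of_le (by linarith)]
    refine (setIntegral_eq_integral_of_forall_compl_eq_zero fun x hx => hzero x ?_).symm
    rw [le_abs]
    simp only [Set.mem_Ioc, not_and, not_le] at hx
    rcases lt_or_ge (-(2*(N:ℝ)*h)) x with h' | h'
    · exact Or.inl (le_of_lt (hx h'))
    · exact Or.inr (by linarith)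
  have step2 : (∫ x in (a 0)..(a (2*N)), f x)
      = ∑ k ∈ Finset.range (2*N), ∫ x in (a k)..(a (k+1)), f x :=
    (intervalIntegral.sum_integral_adjacent_intervals
      (fun k _ => hc.intervalIntegrable _ _)).symm
  -- reindex the Icc sum
  have hmapset : Finset.Icc (-(N:ℤ)) ((N:ℤ)-1)
      = (Finset.range (2*N)).map
          ⟨fun k : ℕ => (k:ℤ) - (N:ℤ), by
              have hinj : Function.Injective (fun k : ℕ => (k:ℤ) - (N:ℤ)) :=
                fun x y hxy => by simp at hxy; exact_mod_cast hxy
              exact hinj⟩ := by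
    ext x
    simp only [Finset.mem_Icc, Finset.mem_map, Finset.mem_range, Function.Embedding.coeFn_mk]
    constructor
    · rintro ⟨h1, h2⟩
      exact ⟨(x + N).toNat, by omega, by omega⟩
    · rintro ⟨k, hk, rfl⟩
      constructor <;> omega
  rw [hmapset, Finset.sum_map]
  simp only [Function.Embedding.coeFn_mk]
  set G : ℕ → ℝ := fun k => h/12 * f (a k) with hG
  have key : ∀ k ∈ Finset.range (2*N),
      h * ((45/132) * (f ((2 * (((k:ℤ) - (N:ℤ) : ℤ) : ℝ) + (15 - Real.sqrt 165) / 30) * h)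
              + f ((2 * (((k:ℤ) - (N:ℤ) : ℤ) : ℝ) + 1 - (15 - Real.sqrt 165) / 30) * h))
        + (64/132) * f ((2 * (((k:ℤ) - (N:ℤ) : ℤ) : ℝ) + 1/2) * h)
        + (55/132) * (f ((2 * (((k:ℤ) - (N:ℤ) : ℤ) : ℝ) + 1 + (5 - Real.sqrt 5) / 10) * h)
              + f ((2 * (((k:ℤ) - (N:ℤ) : ℤ) : ℝ) + 2 - (5 - Real.sqrt 5) / 10) * h)))
      = (∫ x in (a k)..(a (k+1)), f x) + (G k - G (k+1)) := by
    intro k _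
    have hb1 : (2*((((k:ℤ) - (N:ℤ)) : ℤ):ℝ))*h = a k := by
      simp only [ha]; push_cast; ring
    have hb2 : (2*((((k:ℤ) - (N:ℤ)) : ℤ):ℝ)+2)*h = a (k+1) := by
      simp only [ha]; push_cast; ring
    have hp := Hpair ((k:ℤ) - N)
    rw [hb1, hb2] at hp
    simp only [hG]
    linarith [hp]
  rw [Finset.sum_congr rfl key, Finset.sum_add_distrib, Finset.sum_range_sub' G]
  have hG0 : G 0 = 0 := by
    simp only [hG, ha0]
    rw [hzero _ (by rw [abs_neg, abs_of_nonneg hM0])]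
    ring
  have hGN : G (2*N) = 0 := by
    simp only [hG, haN]
    rw [hzero _ (by rw [abs_of_nonneg hM0])]
    ring
  rw [hG0, hGN, step1, step2]
  ring
end

section
/- Let δ = 1/2 − √21/14. The quartic polynomial 112x⁴ − 224x³ + 141x² − 29x + 1 has four distinct real roots ρ₁ < ρ₂ < ρ₃ < ρ₄, all lying in (0,1), and there exist weights w₁ > 0 and w₂ > 0 such that for every h > 0 and every compactly supported continuous (C⁰) spline f of degree at most 7 with knots hℤ, the integral of f over ℝ equals Σ_{i∈ℤ} h·( (49/180)·( f((2i+δ)h) + f((2i+1−δ)h) ) + (64/180)·f((2i+1/2)h) + w₁·( f((2i+1+ρ₁)h) + f((2i+1+ρ₄)h) ) + w₂·( f((2i+1+ρ₂)h) + f((2i+1+ρ₃)h) ) ). -/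
open MeasureTheory

open MeasureTheory

lemma mono1 (k : ℕ) (hk : k < 8) :
    (1:ℝ)/(k+1) = 49/180 * ((1/2 - Real.sqrt 21/14)^k + (1/2 + Real.sqrt 21/14)^k)
      + 64/180 * (1/2:ℝ)^k + 1/20 * ((0:ℝ)^k + 1) := by
  have hs : Real.sqrt 21 ^ 2 = 21 := Real.sq_sqrt (by norm_num)
  set s := Real.sqrt 21 with hsdef
  interval_cases k
  · norm_num
  · norm_num
  · norm_num; linear_combination (-1/360 : ℝ) * hs
  · norm_num; linear_combination (-1/240 : ℝ) * hs
  · norm_num; linear_combination ((-1/70560)*s^2 + (-1/224)) * hs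
  · norm_num; linear_combination ((-1/28224)*s^2 + (-17/4032)) * hs
  · norm_num; linear_combination ((-1/13829760)*s^4 + (-3/54880)*s^2 + (-353/94080)) * hs
  · norm_num; linear_combination ((-1/3951360)*s^4 + (-19/282240)*s^2 + (-29/8960)) * hs

lemma mono2 (s t₁ t₂ : ℝ) (hs : s^2 = 393)
    (ht1 : t₁^2 = (27+s)/224) (ht2 : t₂^2 = (27-s)/224) (k : ℕ) (hk : k < 8) :
    (1:ℝ)/(k+1) + 1/20 * ((0:ℝ)^k + 1)
      = (11/40 - 163*s/47160) * ((1/2 - t₁)^k + (1/2 + t₁)^k)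
        + (11/40 + 163*s/47160) * ((1/2 - t₂)^k + (1/2 + t₂)^k) := by
  interval_cases k
  · norm_num; ring
  · norm_num
  · norm_num
    linear_combination ((163/23580)*s + (-11/20)) * ht1 + ((-163/23580)*s + (-11/20)) * ht2 + (163/2640960 : ℝ) * hs
  · norm_num
    linear_combination ((163/15720)*s + (-33/40)) * ht1 + ((-163/15720)*s + (-33/40)) * ht2 + (163/1760640 : ℝ) * hs
  · norm_num
    linear_combination ((163/23580)*t₁^2*s + (-11/20)*t₁^2 + (163/5281920)*s^2 + (55/6288)*s + (-3993/4480)) * ht1 + ((-163/23580)*t₂^2*s + (-11/20)*t₂^2 + (163/5281920)*s^2 + (-55/6288)*s + (-3993/4480)) * ht2 + ((16867/197191680):ℝ) * hs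
  · norm_num
    linear_combination ((163/9432)*t₁^2*s + (-11/8)*t₁^2 + (163/2112768)*s^2 + (173/37728)*s + (-1529/1792)) * ht1 + ((-163/9432)*t₂^2*s + (-11/8)*t₂^2 + (163/2112768)*s^2 + (-173/37728)*s + (-1529/1792)) * ht2 + ((14089/236630016):ℝ) * hs
  · norm_num
    linear_combination ((163/23580)*t₁^4*s + (-11/20)*t₁^4 + (163/5281920)*t₁^2*s^2 + (191/7860)*t₁^2*s + (-9537/4480)*t₁^2 + (163/1183150080)*s^3 + (44251/394383360)*s^2 + (-37033/394383360)*s + (-774939/1003520)) * ht1 + ((-163/23580)*t₂^4*s + (-11/20)*t₂^4 + (163/5281920)*t₂^2*s^2 + (-191/7860)*t₂^2*s + (-9537/4480)*t₂^2 + (-163/1183150080)*s^3 + (44251/394383360)*s^2 + (37033/394383360)*s + (-774939/1003520)) * ht2 + ((163/132512808960)*s^2 + (1179097/44170936320)) * hs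
  · norm_num
    linear_combination ((1141/47160)*t₁^4*s + (-77/40)*t₁^4 + (163/1509120)*t₁^2*s^2 + (2317/94320)*t₁^2*s + (-3377/1280)*t₁^2 + (163/338042880)*s^3 + (41473/338042880)*s^2 + (-96469/22536192)*s + (-194667/286720)) * ht1 + ((-1141/47160)*t₂^4*s + (-77/40)*t₂^4 + (163/1509120)*t₂^2*s^2 + (-2317/94320)*t₂^2*s + (-3377/1280)*t₂^2 + (-163/338042880)*s^3 + (41473/338042880)*s^2 + (96469/22536192)*s + (-194667/286720)) * ht2 + ((163/37860802560)*s^2 + (-5849/841351168)) * hs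

open MeasureTheory intervalIntegral

lemma evalsum (q : Polynomial ℝ) (hq : q.natDegree ≤ 7) (x : ℝ) :
    q.eval x = ∑ i ∈ Finset.range 8, q.coeff i * x ^ i := by
  conv_lhs => rw [q.as_sum_range' 8 (lt_of_le_of_lt hq (by norm_num))]
  simp [Polynomial.eval_finset_sum]

lemma rule_general (q : Polynomial ℝ) (hq : q.natDegree ≤ 7)
    (c₁ c₂ c₃ w u₁ u₂ u₃ : ℝ)
    (hmono : ∀ k : ℕ, k < 8 → (1:ℝ)/(k+1)
      = c₁ * (u₁^k + (1-u₁)^k) + c₂ * (u₂^k + (1-u₂)^k) + c₃ * u₃^k + w * ((0:ℝ)^k + 1)) :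
    ∫ x in (0:ℝ)..1, q.eval x
      = c₁ * (q.eval u₁ + q.eval (1-u₁)) + c₂ * (q.eval u₂ + q.eval (1-u₂))
        + c₃ * q.eval u₃ + w * (q.eval 0 + q.eval 1) := by
  simp only [evalsum q hq]
  rw [intervalIntegral.integral_finset_sum]
  · simp only [intervalIntegral.integral_const_mul, integral_pow]
    simp only [Finset.mul_sum, ← Finset.sum_add_distrib]
    apply Finset.sum_congr rfl
    intro i hi
    have h := hmono i (Finset.mem_range.mp hi)
    have h1 : (1:ℝ)^(i+1) = 1 := one_pow _
    have h0 : (0:ℝ)^(i+1) = 0 := by rw [pow_succ, mul_zero]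
    rw [h1, h0]
    linear_combination q.coeff i * h
  · intro i _
    exact (Continuous.intervalIntegrable (by continuity) _ _)

lemma rule_aff (q : Polynomial ℝ) (hq : q.natDegree ≤ 7)
    (c₁ c₂ c₃ w u₁ u₂ u₃ : ℝ)
    (hmono : ∀ k : ℕ, k < 8 → (1:ℝ)/(k+1)
      = c₁ * (u₁^k + (1-u₁)^k) + c₂ * (u₂^k + (1-u₂)^k) + c₃ * u₃^k + w * ((0:ℝ)^k + 1))
    (a h : ℝ) (hh : h ≠ 0) :
    ∫ x in a..(a+h), q.eval x
      = h * (c₁ * (q.eval (a+h*u₁) + q.eval (a+h*(1-u₁)))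
          + c₂ * (q.eval (a+h*u₂) + q.eval (a+h*(1-u₂)))
          + c₃ * q.eval (a+h*u₃) + w * (q.eval a + q.eval (a+h))) := by
  set r := q.comp (Polynomial.C a + Polynomial.C h * Polynomial.X) with hrdef
  have hr : ∀ x : ℝ, r.eval x = q.eval (a + h * x) := by
    intro x; simp [hrdef, Polynomial.eval_comp]
  have hrd : r.natDegree ≤ 7 := by
    refine le_trans Polynomial.natDegree_comp_le ?_
    have h1 : (Polynomial.C a + Polynomial.C h * Polynomial.X).natDegree ≤ 1 := by
      refine le_trans (Polynomial.natDegree_add_le _ _) ?_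
      simp only [Polynomial.natDegree_C, max_le_iff]
      exact ⟨Nat.zero_le _, le_trans (Polynomial.natDegree_C_mul_le _ _) (by simp)⟩
    calc q.natDegree * (Polynomial.C a + Polynomial.C h * Polynomial.X).natDegree
        ≤ 7 * 1 := Nat.mul_le_mul hq h1
      _ = 7 := by norm_num
  have h2 := rule_general r hrd c₁ c₂ c₃ w u₁ u₂ u₃ hmono
  have h3 : ∫ x in (0:ℝ)..1, r.eval x = h⁻¹ * ∫ x in a..(a+h), q.eval x := by
    simp only [hr]
    rw [intervalIntegral.integral_comp_add_mul (fun x => q.eval x) hh a]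
    norm_num
  rw [h3] at h2
  simp only [hr] at h2
  rw [show a + h*0 = a by ring, show a + h*1 = a + h by ring] at h2
  rw [← h2]
  field_simp

lemma elem (f : ℝ → ℝ) (p : Polynomial ℝ) (hp : p.degree ≤ (7:ℕ)) (a h : ℝ) (hh : 0 < h)
    (hfp : ∀ x ∈ Set.Icc a (a+h), f x = p.eval x)
    (c₁ c₂ c₃ w u₁ u₂ u₃ : ℝ) (hu₁ : u₁ ∈ Set.Icc (0:ℝ) 1) (hu₂ : u₂ ∈ Set.Icc (0:ℝ) 1)
    (hu₃ : u₃ ∈ Set.Icc (0:ℝ) 1)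
    (hmono : ∀ k : ℕ, k < 8 → (1:ℝ)/(k+1)
      = c₁ * (u₁^k + (1-u₁)^k) + c₂ * (u₂^k + (1-u₂)^k) + c₃ * u₃^k + w * ((0:ℝ)^k + 1)) :
    ∫ x in a..(a+h), f x
      = h * (c₁ * (f (a+h*u₁) + f (a+h*(1-u₁)))
          + c₂ * (f (a+h*u₂) + f (a+h*(1-u₂)))
          + c₃ * f (a+h*u₃) + w * (f a + f (a+h))) := by
  have hmem : ∀ u : ℝ, u ∈ Set.Icc (0:ℝ) 1 → a + h*u ∈ Set.Icc a (a+h) := by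
    intro u hu
    constructor
    · nlinarith [hu.1]
    · nlinarith [hu.2]
  have hint : ∫ x in a..(a+h), f x = ∫ x in a..(a+h), p.eval x := by
    apply intervalIntegral.integral_congr
    intro x hx
    rw [Set.uIcc_of_le (by linarith)] at hx
    exact hfp x hx
  rw [hint, rule_aff p (Polynomial.natDegree_le_iff_degree_le.mpr hp) c₁ c₂ c₃ w u₁ u₂ u₃ hmono a h (ne_of_gt hh)]
  rw [hfp (a+h*u₁) (hmem _ hu₁), hfp (a+h*(1-u₁)) (hmem _ ⟨by linarith [hu₁.2], by linarith [hu₁.1]⟩),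
      hfp (a+h*u₂) (hmem _ hu₂), hfp (a+h*(1-u₂)) (hmem _ ⟨by linarith [hu₂.2], by linarith [hu₂.1]⟩),
      hfp (a+h*u₃) (hmem _ hu₃), hfp a ⟨le_refl a, by linarith⟩, hfp (a+h) ⟨by linarith, le_refl _⟩]

lemma chunk (f : ℝ → ℝ) (h : ℝ) (hh : 0 < h) (hfc : Continuous f)
    (hsp : ∀ i : ℤ, ∃ p : Polynomial ℝ, p.degree ≤ (7:ℕ) ∧
      ∀ x ∈ Set.Icc ((i : ℝ) * h) ((i + 1 : ℝ) * h), f x = p.eval x)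
    (ρ₁ ρ₂ ρ₃ ρ₄ w₁ w₂ : ℝ) (hρ₄ : ρ₄ = 1 - ρ₁) (hρ₃ : ρ₃ = 1 - ρ₂)
    (hρ₁ : ρ₁ ∈ Set.Icc (0:ℝ) 1) (hρ₂ : ρ₂ ∈ Set.Icc (0:ℝ) 1)
    (hm2 : ∀ k : ℕ, k < 8 → (1:ℝ)/(k+1)
      = w₁ * (ρ₁^k + (1-ρ₁)^k) + w₂ * (ρ₂^k + (1-ρ₂)^k) + 0 * (1/2:ℝ)^k + (-(1/20)) * ((0:ℝ)^k + 1))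
    (j : ℤ) :
    ∫ x in (2*(j:ℝ)*h)..(2*(j:ℝ)*h + 2*h), f x
      = h * ((49/180) * (f ((2 * (j : ℝ) + (1/2 - Real.sqrt 21 / 14)) * h)
              + f ((2 * (j : ℝ) + 1 - (1/2 - Real.sqrt 21 / 14)) * h))
          + (64/180) * f ((2 * (j : ℝ) + 1/2) * h)
          + w₁ * (f ((2 * (j : ℝ) + 1 + ρ₁) * h) + f ((2 * (j : ℝ) + 1 + ρ₄) * h))
          + w₂ * (f ((2 * (j : ℝ) + 1 + ρ₂) * h) + f ((2 * (j : ℝ) + 1 + ρ₃) * h)))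
        + (h/20) * (f (2*(j:ℝ)*h) - f ((2*(j:ℝ)+2)*h)) := by
  have hs21 : Real.sqrt 21 < 5 := by
    rw [show (5:ℝ) = Real.sqrt 25 by rw [show (25:ℝ) = 5^2 by norm_num, Real.sqrt_sq (by norm_num : (0:ℝ) ≤ 5)]]
    exact Real.sqrt_lt_sqrt (by norm_num) (by norm_num)
  have hs21' : 0 ≤ Real.sqrt 21 := Real.sqrt_nonneg 21
  obtain ⟨p, hpd, hpe⟩ := hsp (2*j)
  obtain ⟨q, hqd, hqe⟩ := hsp (2*j+1)
  have e1 : ((2*j : ℤ) : ℝ) * h = 2*(j:ℝ)*h := by push_cast; ring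
  have e2 : (((2*j : ℤ) : ℝ) + 1) * h = 2*(j:ℝ)*h + h := by push_cast; ring
  have e3 : ((2*j+1 : ℤ) : ℝ) * h = 2*(j:ℝ)*h + h := by push_cast; ring
  have e4 : (((2*j+1 : ℤ) : ℝ) + 1) * h = 2*(j:ℝ)*h + h + h := by push_cast; ring
  rw [e1, e2] at hpe
  rw [e3, e4] at hqe
  have hm1 : ∀ k : ℕ, k < 8 → (1:ℝ)/(k+1)
      = (49/180) * ((1/2 - Real.sqrt 21 / 14)^k + (1-(1/2 - Real.sqrt 21 / 14))^k)
        + 0 * ((1/2 - Real.sqrt 21 / 14)^k + (1-(1/2 - Real.sqrt 21 / 14))^k)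
        + (64/180) * (1/2:ℝ)^k + (1/20) * ((0:ℝ)^k + 1) := by
    intro k hk
    have := mono1 k hk
    linear_combination this
  have heven := elem f p hpd (2*(j:ℝ)*h) h hh hpe (49/180) 0 (64/180) (1/20)
    (1/2 - Real.sqrt 21 / 14) (1/2 - Real.sqrt 21 / 14) (1/2)
    ⟨by linarith, by linarith⟩ ⟨by linarith, by linarith⟩ (by norm_num) hm1
  have hodd := elem f q hqd (2*(j:ℝ)*h + h) h hh hqe w₁ w₂ 0 (-(1/20))
    ρ₁ ρ₂ (1/2) hρ₁ hρ₂ (by norm_num) hm2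
  have hsplit := intervalIntegral.integral_add_adjacent_intervals
    (a := 2*(j:ℝ)*h) (b := 2*(j:ℝ)*h + h) (c := 2*(j:ℝ)*h + 2*h)
    (hfc.intervalIntegrable _ _) (hfc.intervalIntegrable _ _) (f := f) (μ := MeasureTheory.volume)
  rw [show 2*(j:ℝ)*h + 2*h = (2*(j:ℝ)*h + h) + h from by ring] at hsplit ⊢
  rw [← hsplit, heven, hodd, hρ₄, hρ₃]
  rw [show (2 * (j : ℝ) + (1/2 - Real.sqrt 21 / 14)) * h = 2*(j:ℝ)*h + h*(1/2 - Real.sqrt 21 / 14) from by ring,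
      show (2 * (j : ℝ) + 1 - (1/2 - Real.sqrt 21 / 14)) * h = 2*(j:ℝ)*h + h*(1-(1/2 - Real.sqrt 21 / 14)) from by ring,
      show (2 * (j : ℝ) + 1/2) * h = 2*(j:ℝ)*h + h*(1/2) from by ring,
      show (2 * (j : ℝ) + 1 + ρ₁) * h = (2*(j:ℝ)*h + h) + h*ρ₁ from by ring,
      show (2 * (j : ℝ) + 1 + (1-ρ₁)) * h = (2*(j:ℝ)*h + h) + h*(1-ρ₁) from by ring,
      show (2 * (j : ℝ) + 1 + ρ₂) * h = (2*(j:ℝ)*h + h) + h*ρ₂ from by ring,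
      show (2 * (j : ℝ) + 1 + (1-ρ₂)) * h = (2*(j:ℝ)*h + h) + h*(1-ρ₂) from by ring,
      show (2*(j:ℝ)+2)*h = (2*(j:ℝ)*h + h) + h from by ring]
  ring
section MainAssembly

variable (f : ℝ → ℝ) (h : ℝ)

lemma main_assembly (hh : 0 < h) (hfc : Continuous f) (hcs : HasCompactSupport f)
    (hsp : ∀ i : ℤ, ∃ p : Polynomial ℝ, p.degree ≤ (7:ℕ) ∧
      ∀ x ∈ Set.Icc ((i : ℝ) * h) ((i + 1 : ℝ) * h), f x = p.eval x)
    (ρ₁ ρ₂ ρ₃ ρ₄ w₁ w₂ : ℝ) (hρ₄ : ρ₄ = 1 - ρ₁) (hρ₃ : ρ₃ = 1 - ρ₂)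
    (hρ₁ : ρ₁ ∈ Set.Icc (0:ℝ) 1) (hρ₂ : ρ₂ ∈ Set.Icc (0:ℝ) 1)
    (hm2 : ∀ k : ℕ, k < 8 → (1:ℝ)/(k+1)
      = w₁ * (ρ₁^k + (1-ρ₁)^k) + w₂ * (ρ₂^k + (1-ρ₂)^k)
        + 0 * (1/2:ℝ)^k + (-(1/20)) * ((0:ℝ)^k + 1)) :
    ∫ x, f x = ∑' i : ℤ,
      h * ((49/180) * (f ((2 * (i : ℝ) + (1/2 - Real.sqrt 21 / 14)) * h)
              + f ((2 * (i : ℝ) + 1 - (1/2 - Real.sqrt 21 / 14)) * h))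
        + (64/180) * f ((2 * (i : ℝ) + 1/2) * h)
        + w₁ * (f ((2 * (i : ℝ) + 1 + ρ₁) * h) + f ((2 * (i : ℝ) + 1 + ρ₄) * h))
        + w₂ * (f ((2 * (i : ℝ) + 1 + ρ₂) * h) + f ((2 * (i : ℝ) + 1 + ρ₃) * h))) := by
  have hs21 : Real.sqrt 21 < 5 := by
    rw [show (5:ℝ) = Real.sqrt 25 by
      rw [show (25:ℝ) = 5^2 by norm_num, Real.sqrt_sq (by norm_num : (0:ℝ) ≤ 5)]]
    exact Real.sqrt_lt_sqrt (by norm_num) (by norm_num)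
  have hs21' : 0 ≤ Real.sqrt 21 := Real.sqrt_nonneg 21
  set T : ℤ → ℝ := fun i =>
      h * ((49/180) * (f ((2 * (i : ℝ) + (1/2 - Real.sqrt 21 / 14)) * h)
              + f ((2 * (i : ℝ) + 1 - (1/2 - Real.sqrt 21 / 14)) * h))
        + (64/180) * f ((2 * (i : ℝ) + 1/2) * h)
        + w₁ * (f ((2 * (i : ℝ) + 1 + ρ₁) * h) + f ((2 * (i : ℝ) + 1 + ρ₄) * h))
        + w₂ * (f ((2 * (i : ℝ) + 1 + ρ₂) * h) + f ((2 * (i : ℝ) + 1 + ρ₃) * h))) with hT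
  obtain ⟨R, hR⟩ := hcs.isBounded.subset_closedBall 0
  have hfz : ∀ x : ℝ, R < |x| → f x = 0 := by
    intro x hx
    apply image_eq_zero_of_notMem_tsupport
    intro hmem
    have h2 := hR hmem
    rw [Metric.mem_closedBall, Real.dist_eq, sub_zero] at h2
    linarith
  obtain ⟨N, hN⟩ := exists_nat_gt (R / (2*h))
  have hRB : R < 2*(N:ℝ)*h := by
    have h2 := (div_lt_iff₀ (by linarith : (0:ℝ) < 2*h)).mp hN
    nlinarith [h2]
  have key : ∀ i : ℤ, ((N:ℤ) ≤ i ∨ i ≤ -(N:ℤ) - 1) → ∀ c : ℝ, 0 ≤ c → c ≤ 2 →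
      f ((2*(i:ℝ) + c)*h) = 0 := by
    intro i hi c hc0 hc2
    apply hfz
    rcases hi with hi | hi
    · have hi' : (N:ℝ) ≤ (i:ℝ) := by exact_mod_cast hi
      have harg : 2*(N:ℝ)*h ≤ (2*(i:ℝ) + c)*h := by nlinarith
      calc R < 2*(N:ℝ)*h := hRB
        _ ≤ (2*(i:ℝ)+c)*h := harg
        _ ≤ |(2*(i:ℝ)+c)*h| := le_abs_self _
    · have hi' : (i:ℝ) ≤ -(N:ℝ) - 1 := by exact_mod_cast hi
      have harg : (2*(i:ℝ) + c)*h ≤ -(2*(N:ℝ)*h) := by nlinarith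
      calc R < 2*(N:ℝ)*h := hRB
        _ ≤ -((2*(i:ℝ)+c)*h) := by linarith
        _ ≤ |(2*(i:ℝ)+c)*h| := neg_le_abs _
  classical
  have hTzero : ∀ i : ℤ,
      i ∉ Finset.image (fun k : ℕ => (k:ℤ) - (N:ℤ)) (Finset.range (2*N)) → T i = 0 := by
    intro i hiS
    have hi : (N:ℤ) ≤ i ∨ i ≤ -(N:ℤ) - 1 := by
      by_contra hcon
      push_neg at hcon
      exact hiS (Finset.mem_image.mpr ⟨(i + N).toNat, Finset.mem_range.mpr (by omega), by omega⟩)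
    have k1 := key i hi
    rw [hT]
    simp only
    rw [show (2*(i:ℝ) + 1 - (1/2 - Real.sqrt 21 / 14)) = (2*(i:ℝ) + (1 - (1/2 - Real.sqrt 21 / 14))) from by ring,
        show (2*(i:ℝ) + 1 + ρ₁) = (2*(i:ℝ) + (1 + ρ₁)) from by ring,
        show (2*(i:ℝ) + 1 + ρ₂) = (2*(i:ℝ) + (1 + ρ₂)) from by ring,
        show (2*(i:ℝ) + 1 + ρ₃) = (2*(i:ℝ) + (1 + ρ₃)) from by ring,
        show (2*(i:ℝ) + 1 + ρ₄) = (2*(i:ℝ) + (1 + ρ₄)) from by ring]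
    rw [k1 (1/2 - Real.sqrt 21 / 14) (by linarith) (by linarith),
        k1 (1 - (1/2 - Real.sqrt 21 / 14)) (by linarith) (by linarith),
        k1 (1/2) (by norm_num) (by norm_num),
        k1 (1 + ρ₁) (by linarith [hρ₁.1]) (by linarith [hρ₁.2]),
        k1 (1 + ρ₂) (by linarith [hρ₂.1]) (by linarith [hρ₂.2]),
        k1 (1 + ρ₃) (by rw [hρ₃]; linarith [hρ₂.2]) (by rw [hρ₃]; linarith [hρ₂.1]),
        k1 (1 + ρ₄) (by rw [hρ₄]; linarith [hρ₁.2]) (by rw [hρ₄]; linarith [hρ₁.1])]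
    ring
  have hck : ∀ k ∈ Finset.range (2*N),
      ∫ x in (2*((k:ℝ) - (N:ℝ))*h)..(2*(((k:ℝ)+1) - (N:ℝ))*h), f x
        = T ((k:ℤ) - (N:ℤ))
          + (h/20) * (f (2*((k:ℝ) - (N:ℝ))*h) - f (2*(((k:ℝ)+1) - (N:ℝ))*h)) := by
    intro k _
    have hc := chunk f h hh hfc hsp ρ₁ ρ₂ ρ₃ ρ₄ w₁ w₂ hρ₄ hρ₃ hρ₁ hρ₂ hm2 ((k:ℤ) - (N:ℤ))
    rw [show (((k:ℤ) - (N:ℤ) : ℤ):ℝ) = (k:ℝ) - (N:ℝ) from by push_cast; ring] at hc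
    rw [show 2*((k:ℝ) - (N:ℝ))*h + 2*h = 2*(((k:ℝ)+1) - (N:ℝ))*h from by ring] at hc
    rw [show (2*((k:ℝ) - (N:ℝ))+2)*h = 2*(((k:ℝ)+1) - (N:ℝ))*h from by ring] at hc
    rw [hc, hT]
    simp only
    push_cast
    ring
  have hle : -(2*(N:ℝ)*h) ≤ 2*(N:ℝ)*h := by
    have h2 : (0:ℝ) ≤ 2*(N:ℝ)*h := by positivity
    linarith
  have hint0 : ∫ x, f x = ∫ x in (-(2*(N:ℝ)*h))..(2*(N:ℝ)*h), f x := by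
    rw [intervalIntegral.integral_of_le hle]
    rw [MeasureTheory.setIntegral_eq_integral_of_forall_compl_eq_zero]
    intro x hx
    apply hfz
    rw [Set.mem_Ioc, not_and_or, not_lt, not_le] at hx
    rcases hx with h1 | h2
    · have h3 := neg_le_abs x
      linarith
    · have h3 := le_abs_self x
      linarith
  have hadj := intervalIntegral.sum_integral_adjacent_intervals (μ := MeasureTheory.volume)
    (f := f) (a := fun k : ℕ => 2*((k:ℝ) - (N:ℝ))*h) (n := 2*N)
    (fun k _ => hfc.intervalIntegrable _ _)
  push_cast at hadj
  rw [show 2*((0:ℝ) - (N:ℝ))*h = -(2*(N:ℝ)*h) from by ring,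
      show 2*(2*(N:ℝ) - (N:ℝ))*h = 2*(N:ℝ)*h from by ring] at hadj
  have hG0 : f (2*((0:ℝ) - (N:ℝ))*h) = 0 := by
    apply hfz
    rw [show 2*((0:ℝ) - (N:ℝ))*h = -(2*(N:ℝ)*h) from by ring, abs_neg,
        abs_of_nonneg (by positivity : (0:ℝ) ≤ 2*(N:ℝ)*h)]
    exact hRB
  have hGn : f (2*(2*(N:ℝ) - (N:ℝ))*h) = 0 := by
    apply hfz
    rw [show 2*(2*(N:ℝ) - (N:ℝ))*h = 2*(N:ℝ)*h from by ring,
        abs_of_nonneg (by positivity : (0:ℝ) ≤ 2*(N:ℝ)*h)]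
    exact hRB
  have htel : ∑ k ∈ Finset.range (2*N),
      (f (2*((k:ℝ) - (N:ℝ))*h) - f (2*(((k:ℝ)+1) - (N:ℝ))*h)) = 0 := by
    have h4 := Finset.sum_range_sub' (fun k : ℕ => f (2*((k:ℝ) - (N:ℝ))*h)) (2*N)
    calc ∑ k ∈ Finset.range (2*N), (f (2*((k:ℝ) - (N:ℝ))*h) - f (2*(((k:ℝ)+1) - (N:ℝ))*h))
        = ∑ k ∈ Finset.range (2*N),
            (f (2*((k:ℝ) - (N:ℝ))*h) - f (2*((((k+1:ℕ)):ℝ) - (N:ℝ))*h)) := by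
          apply Finset.sum_congr rfl
          intro k _
          congr 2
          push_cast
          ring
      _ = f (2*(((0:ℕ):ℝ) - (N:ℝ))*h) - f (2*(((2*N:ℕ):ℝ) - (N:ℝ))*h) := h4
      _ = 0 := by
          push_cast
          rw [hG0, hGn]
          ring
  have hsum : ∑ k ∈ Finset.range (2*N),
      (T ((k:ℤ) - (N:ℤ)) + (h/20) * (f (2*((k:ℝ) - (N:ℝ))*h) - f (2*(((k:ℝ)+1) - (N:ℝ))*h)))
        = ∑ k ∈ Finset.range (2*N), T ((k:ℤ) - (N:ℤ)) := by
    rw [Finset.sum_add_distrib]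
    have hpull : ∑ k ∈ Finset.range (2*N),
        (h/20) * (f (2*((k:ℝ) - (N:ℝ))*h) - f (2*(((k:ℝ)+1) - (N:ℝ))*h))
          = (h/20) * ∑ k ∈ Finset.range (2*N),
              (f (2*((k:ℝ) - (N:ℝ))*h) - f (2*(((k:ℝ)+1) - (N:ℝ))*h)) := by
      rw [Finset.mul_sum]
    rw [hpull, htel, mul_zero, add_zero]
  have himg : ∑ i ∈ Finset.image (fun k : ℕ => (k:ℤ) - (N:ℤ)) (Finset.range (2*N)), T i
      = ∑ k ∈ Finset.range (2*N), T ((k:ℤ) - (N:ℤ)) :=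
    Finset.sum_image (by intro x _ y _ e; have e' : (x:ℤ) - (N:ℤ) = (y:ℤ) - (N:ℤ) := e; omega)
  calc ∫ x, f x = ∫ x in (-(2*(N:ℝ)*h))..(2*(N:ℝ)*h), f x := hint0
    _ = ∑ k ∈ Finset.range (2*N), ∫ x in (2*((k:ℝ) - (N:ℝ))*h)..(2*(((k:ℝ)+1) - (N:ℝ))*h), f x := by
        rw [hadj]
    _ = ∑ k ∈ Finset.range (2*N),
        (T ((k:ℤ) - (N:ℤ)) + (h/20) * (f (2*((k:ℝ) - (N:ℝ))*h) - f (2*(((k:ℝ)+1) - (N:ℝ))*h))) :=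
        Finset.sum_congr rfl hck
    _ = ∑ k ∈ Finset.range (2*N), T ((k:ℤ) - (N:ℤ)) := hsum
    _ = ∑ i ∈ Finset.image (fun k : ℕ => (k:ℤ) - (N:ℤ)) (Finset.range (2*N)), T i := himg.symm
    _ = ∑' i : ℤ, T i := (tsum_eq_sum hTzero).symm

end MainAssembly

/-- The asymptotic 3.5-node-per-element Gaussian rule for C⁰ septic splines:
with `δ = 1/2 - √21/14`, the quartic `112x⁴ - 224x³ + 141x² - 29x + 1` has four
distinct real roots `ρ₁ < ρ₂ < ρ₃ < ρ₄` in `(0,1)`, and there are positive weights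
`w₁, w₂` so that the corresponding rule is exact on compactly supported C⁰
septic splines. -/
theorem stmt_5 :
    ∃ ρ₁ ρ₂ ρ₃ ρ₄ : ℝ, ρ₁ < ρ₂ ∧ ρ₂ < ρ₃ ∧ ρ₃ < ρ₄ ∧
      ρ₁ ∈ Set.Ioo (0 : ℝ) 1 ∧ ρ₂ ∈ Set.Ioo (0 : ℝ) 1 ∧
      ρ₃ ∈ Set.Ioo (0 : ℝ) 1 ∧ ρ₄ ∈ Set.Ioo (0 : ℝ) 1 ∧
      112 * ρ₁^4 - 224 * ρ₁^3 + 141 * ρ₁^2 - 29 * ρ₁ + 1 = 0 ∧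
      112 * ρ₂^4 - 224 * ρ₂^3 + 141 * ρ₂^2 - 29 * ρ₂ + 1 = 0 ∧
      112 * ρ₃^4 - 224 * ρ₃^3 + 141 * ρ₃^2 - 29 * ρ₃ + 1 = 0 ∧
      112 * ρ₄^4 - 224 * ρ₄^3 + 141 * ρ₄^2 - 29 * ρ₄ + 1 = 0 ∧
      ∃ w₁ w₂ : ℝ, 0 < w₁ ∧ 0 < w₂ ∧
        ∀ h : ℝ, 0 < h → ∀ f : ℝ → ℝ, IsCompactlySupportedSpline 7 0 h f →
          ∫ x, f x = ∑' i : ℤ,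
            h * ((49/180) * (f ((2 * (i : ℝ) + (1/2 - Real.sqrt 21 / 14)) * h)
                    + f ((2 * (i : ℝ) + 1 - (1/2 - Real.sqrt 21 / 14)) * h))
              + (64/180) * f ((2 * (i : ℝ) + 1/2) * h)
              + w₁ * (f ((2 * (i : ℝ) + 1 + ρ₁) * h) + f ((2 * (i : ℝ) + 1 + ρ₄) * h))
              + w₂ * (f ((2 * (i : ℝ) + 1 + ρ₂) * h) + f ((2 * (i : ℝ) + 1 + ρ₃) * h))) := by
  set s : ℝ := Real.sqrt 393 with hsdef
  have hs : s^2 = 393 := Real.sq_sqrt (by norm_num)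
  have hs0 : 0 < s := Real.sqrt_pos.mpr (by norm_num)
  have hs20 : s < 20 := (Real.sqrt_lt' (by norm_num)).mpr (by norm_num)
  set t₁ : ℝ := Real.sqrt ((27+s)/224) with ht1def
  set t₂ : ℝ := Real.sqrt ((27-s)/224) with ht2def
  have ht1 : t₁^2 = (27+s)/224 := Real.sq_sqrt (by apply div_nonneg <;> linarith)
  have ht2 : t₂^2 = (27-s)/224 := Real.sq_sqrt (by apply div_nonneg <;> linarith)
  have ht2pos : 0 < t₂ := Real.sqrt_pos.mpr (by apply div_pos <;> linarith)
  have ht12 : t₂ < t₁ := Real.sqrt_lt_sqrt (by apply div_nonneg <;> linarith) (by linarith)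
  have ht1half : t₁ < 1/2 := (Real.sqrt_lt' (by norm_num)).mpr (by
    rw [div_lt_iff₀ (by norm_num : (0:ℝ) < 224)]
    nlinarith)
  have ht1pos : 0 < t₁ := lt_trans ht2pos ht12
  refine ⟨1/2 - t₁, 1/2 - t₂, 1/2 + t₂, 1/2 + t₁, by linarith, by linarith, by linarith,
    ⟨by linarith, by linarith⟩, ⟨by linarith, by linarith⟩,
    ⟨by linarith, by linarith⟩, ⟨by linarith, by linarith⟩, ?_, ?_, ?_, ?_, ?_⟩
  · linear_combination (112*t₁^2 + (1/2)*s - 27/2) * ht1 + (1/448) * hs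
  · linear_combination (112*t₂^2 - (1/2)*s - 27/2) * ht2 + (1/448) * hs
  · linear_combination (112*t₂^2 - (1/2)*s - 27/2) * ht2 + (1/448) * hs
  · linear_combination (112*t₁^2 + (1/2)*s - 27/2) * ht1 + (1/448) * hs
  refine ⟨11/40 - 163*s/47160, 11/40 + 163*s/47160, by linarith, by linarith, ?_⟩
  intro h hh f hf
  obtain ⟨hcs, hcd, hsp⟩ := hf
  have hfc : Continuous f := hcd.continuous
  have hsp' : ∀ i : ℤ, ∃ p : Polynomial ℝ, p.degree ≤ (7:ℕ) ∧
      ∀ x ∈ Set.Icc ((i : ℝ) * h) ((i + 1 : ℝ) * h), f x = p.eval x := hsp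
  have hm2 : ∀ k : ℕ, k < 8 → (1:ℝ)/(k+1)
      = (11/40 - 163*s/47160) * ((1/2 - t₁)^k + (1-(1/2 - t₁))^k)
        + (11/40 + 163*s/47160) * ((1/2 - t₂)^k + (1-(1/2 - t₂))^k)
        + 0 * (1/2:ℝ)^k + (-(1/20)) * ((0:ℝ)^k + 1) := by
    intro k hk
    linear_combination mono2 s t₁ t₂ hs ht1 ht2 k hk
  exact main_assembly f h hh hfc hcs hsp' (1/2 - t₁) (1/2 - t₂) (1/2 + t₂) (1/2 + t₁)
    (11/40 - 163*s/47160) (11/40 + 163*s/47160) (by ring) (by ring)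
    ⟨by linarith, by linarith⟩ ⟨by linarith, by linarith⟩ hm2
end

section
/- There exist a real number d₁ ∈ (1/2, 1) satisfying 164·d₁⁴ − 328·d₁³ + 150·d₁² + 14·d₁ − 5 = 0 and weights w₁ > 0, w₂ > 0 such that for every h > 0 and every compactly supported C² spline f of degree at most 5 with knots hℤ, the integral of f over ℝ equals Σ_{i∈ℤ} h·( w₁·( f((2i+d₁)h) + f((2i+1−d₁)h) ) + w₂·f((2i+3/2)h) ). -/
open MeasureTheory Set Filter

set_option maxHeartbeats 1000000


private lemma hasDerivAt_quintic (c0 c1 c2 c3 c4 c5 : ℝ) (x : ℝ) :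
    HasDerivAt (fun y : ℝ => c0 + c1*y + c2*y^2 + c3*y^3 + c4*y^4 + c5*y^5)
      (c1 + 2*c2*x + 3*c3*x^2 + 4*c4*x^3 + 5*c5*x^4) x := by
  have h0 : HasDerivAt (fun _ : ℝ => c0) 0 x := hasDerivAt_const x c0
  have h1 : HasDerivAt (fun y : ℝ => c1 * y) (c1 * 1) x := (hasDerivAt_id x).const_mul c1
  have h2 := (hasDerivAt_pow 2 x).const_mul c2
  have h3 := (hasDerivAt_pow 3 x).const_mul c3
  have h4 := (hasDerivAt_pow 4 x).const_mul c4
  have h5 := (hasDerivAt_pow 5 x).const_mul c5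
  have H := ((((h0.add h1).add h2).add h3).add h4).add h5
  refine (H.congr_deriv (by push_cast; ring)).congr_of_eventuallyEq (Filter.Eventually.of_forall fun y => ?_)
  simp only [Pi.add_apply]

private lemma hasDerivAt_quartic (c1 c2 c3 c4 c5 : ℝ) (x : ℝ) :
    HasDerivAt (fun y : ℝ => c1 + 2*c2*y + 3*c3*y^2 + 4*c4*y^3 + 5*c5*y^4)
      (2*c2 + 6*c3*x + 12*c4*x^2 + 20*c5*x^3) x := by
  have h0 : HasDerivAt (fun _ : ℝ => c1) 0 x := hasDerivAt_const x c1
  have h1 : HasDerivAt (fun y : ℝ => 2*c2 * y) (2*c2 * 1) x := (hasDerivAt_id x).const_mul (2*c2)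
  have h2 := (hasDerivAt_pow 2 x).const_mul (3*c3)
  have h3 := (hasDerivAt_pow 3 x).const_mul (4*c4)
  have h4 := (hasDerivAt_pow 4 x).const_mul (5*c5)
  have H := (((h0.add h1).add h2).add h3).add h4
  refine (H.congr_deriv (by push_cast; ring)).congr_of_eventuallyEq (Filter.Eventually.of_forall fun y => ?_)
  simp only [Pi.add_apply]

private lemma integral_quintic (c0 c1 c2 c3 c4 c5 a b : ℝ) :
    ∫ x in a..b, (c0 + c1*x + c2*x^2 + c3*x^3 + c4*x^4 + c5*x^5)
      = c0*(b-a) + c1*(b^2-a^2)/2 + c2*(b^3-a^3)/3 + c3*(b^4-a^4)/4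
        + c4*(b^5-a^5)/5 + c5*(b^6-a^6)/6 := by
  have hi : ∀ (c : ℝ) (n : ℕ), IntervalIntegrable (fun x : ℝ => c * x ^ n) volume a b :=
    fun c n => (continuous_const.mul (continuous_pow n)).intervalIntegrable a b
  have hp : ∀ (c : ℝ) (n : ℕ), ∫ x in a..b, c * x ^ n = c * ((b^(n+1) - a^(n+1))/(n+1)) := by
    intro c n
    rw [intervalIntegral.integral_const_mul, integral_pow]
  have i5 := hi c5 5
  have i45 := (hi c4 4).add i5
  have i345 := (hi c3 3).add i45
  have i2345 := (hi c2 2).add i345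
  have i12345 := (hi c1 1).add i2345
  have e : (fun x : ℝ => c0 + c1*x + c2*x^2 + c3*x^3 + c4*x^4 + c5*x^5)
      = fun x : ℝ => c0*x^0 + (c1*x^1 + (c2*x^2 + (c3*x^3 + (c4*x^4 + c5*x^5)))) := by
    funext x; ring
  rw [e, intervalIntegral.integral_add (hi c0 0) i12345,
      intervalIntegral.integral_add (hi c1 1) i2345,
      intervalIntegral.integral_add (hi c2 2) i345,
      intervalIntegral.integral_add (hi c3 3) i45,
      intervalIntegral.integral_add (hi c4 4) i5,
      hp c0 0, hp c1 1, hp c2 2, hp c3 3, hp c4 4, hp c5 5]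
  norm_num
  ring


private lemma deriv2_right (f g g1 g2 : ℝ → ℝ) (a b : ℝ) (hab : a < b)
    (hf : Differentiable ℝ f) (hf1 : Differentiable ℝ (deriv f))
    (hg : ∀ x, HasDerivAt g (g1 x) x) (hg1 : ∀ x, HasDerivAt g1 (g2 x) x)
    (hfg : ∀ x ∈ Set.Icc a b, f x = g x) :
    deriv f a = g1 a ∧ deriv (deriv f) a = g2 a := by
  have key : ∀ x ∈ Set.Ico a b, deriv f x = g1 x := by
    intro x hx
    have hmem : Set.Icc a b ∈ nhdsWithin x (Set.Ici x) :=
      Filter.mem_of_superset (Icc_mem_nhdsGE hx.2) (Set.Icc_subset_Icc_left hx.1)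
    have hEv : f =ᶠ[nhdsWithin x (Set.Ici x)] g :=
      Filter.eventuallyEq_of_mem hmem (fun y hy => hfg y hy)
    have H1 : HasDerivWithinAt f (g1 x) (Set.Ici x) x :=
      ((hg x).hasDerivWithinAt).congr_of_eventuallyEq hEv (hfg x ⟨hx.1, hx.2.le⟩)
    have H2 : HasDerivWithinAt f (deriv f x) (Set.Ici x) x :=
      (hf x).hasDerivAt.hasDerivWithinAt
    have hu := (uniqueDiffOn_Ici x) x Set.self_mem_Ici
    exact (H2.derivWithin hu).symm.trans (H1.derivWithin hu)
  have h1 : deriv f a = g1 a := key a ⟨le_rfl, hab⟩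
  have hmem : Set.Ico a b ∈ nhdsWithin a (Set.Ici a) := Ico_mem_nhdsGE hab
  have hEv : deriv f =ᶠ[nhdsWithin a (Set.Ici a)] g1 :=
    Filter.eventuallyEq_of_mem hmem key
  have H1 : HasDerivWithinAt (deriv f) (g2 a) (Set.Ici a) a :=
    ((hg1 a).hasDerivWithinAt).congr_of_eventuallyEq hEv h1
  have H2 : HasDerivWithinAt (deriv f) (deriv (deriv f) a) (Set.Ici a) a :=
    (hf1 a).hasDerivAt.hasDerivWithinAt
  have hu := (uniqueDiffOn_Ici a) a Set.self_mem_Ici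
  exact ⟨h1, (H2.derivWithin hu).symm.trans (H1.derivWithin hu)⟩

private lemma deriv2_left (f g g1 g2 : ℝ → ℝ) (a b : ℝ) (hab : a < b)
    (hf : Differentiable ℝ f) (hf1 : Differentiable ℝ (deriv f))
    (hg : ∀ x, HasDerivAt g (g1 x) x) (hg1 : ∀ x, HasDerivAt g1 (g2 x) x)
    (hfg : ∀ x ∈ Set.Icc a b, f x = g x) :
    deriv f b = g1 b ∧ deriv (deriv f) b = g2 b := by
  have key : ∀ x ∈ Set.Ioc a b, deriv f x = g1 x := by
    intro x hx
    have hmem : Set.Icc a b ∈ nhdsWithin x (Set.Iic x) :=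
      Filter.mem_of_superset (Icc_mem_nhdsLE hx.1) (Set.Icc_subset_Icc_right hx.2)
    have hEv : f =ᶠ[nhdsWithin x (Set.Iic x)] g :=
      Filter.eventuallyEq_of_mem hmem (fun y hy => hfg y hy)
    have H1 : HasDerivWithinAt f (g1 x) (Set.Iic x) x :=
      ((hg x).hasDerivWithinAt).congr_of_eventuallyEq hEv (hfg x ⟨hx.1.le, hx.2⟩)
    have H2 : HasDerivWithinAt f (deriv f x) (Set.Iic x) x :=
      (hf x).hasDerivAt.hasDerivWithinAt
    have hu := (uniqueDiffOn_Iic x) x Set.self_mem_Iic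
    exact (H2.derivWithin hu).symm.trans (H1.derivWithin hu)
  have h1 : deriv f b = g1 b := key b ⟨hab, le_rfl⟩
  have hmem : Set.Ioc a b ∈ nhdsWithin b (Set.Iic b) := Ioc_mem_nhdsLE hab
  have hEv : deriv f =ᶠ[nhdsWithin b (Set.Iic b)] g1 :=
    Filter.eventuallyEq_of_mem hmem key
  have H1 : HasDerivWithinAt (deriv f) (g2 b) (Set.Iic b) b :=
    ((hg1 b).hasDerivWithinAt).congr_of_eventuallyEq hEv h1
  have H2 : HasDerivWithinAt (deriv f) (deriv (deriv f) b) (Set.Iic b) b :=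
    (hf1 b).hasDerivAt.hasDerivWithinAt
  have hu := (uniqueDiffOn_Iic b) b Set.self_mem_Iic
  exact ⟨h1, (H2.derivWithin hu).symm.trans (H1.derivWithin hu)⟩


private lemma elemA_phys (Wv t al be ga : ℝ)
    (N0 : (1:ℝ) = 2*Wv - 2*al)
    (N2 : (1:ℝ)/12 = 2*Wv*t^2 - al/2 + 2*be - 4*ga)
    (N4 : (1:ℝ)/80 = 2*Wv*t^4 - al/8 + be - 6*ga)
    (c0 c1 c2 c3 c4 c5 a h : ℝ) :
    c0*((a+h)-a) + c1*((a+h)^2-a^2)/2 + c2*((a+h)^3-a^3)/3 + c3*((a+h)^4-a^4)/4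
      + c4*((a+h)^5-a^5)/5 + c5*((a+h)^6-a^6)/6
    = h*Wv*((c0 + c1*(a+h/2+t*h) + c2*(a+h/2+t*h)^2 + c3*(a+h/2+t*h)^3
              + c4*(a+h/2+t*h)^4 + c5*(a+h/2+t*h)^5)
          + (c0 + c1*(a+h/2-t*h) + c2*(a+h/2-t*h)^2 + c3*(a+h/2-t*h)^3
              + c4*(a+h/2-t*h)^4 + c5*(a+h/2-t*h)^5))
      + h*(-(al*(c0 + c1*(a+h) + c2*(a+h)^2 + c3*(a+h)^3 + c4*(a+h)^4 + c5*(a+h)^5))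
            + be*h*(c1 + 2*c2*(a+h) + 3*c3*(a+h)^2 + 4*c4*(a+h)^3 + 5*c5*(a+h)^4)
            - ga*h^2*(2*c2 + 6*c3*(a+h) + 12*c4*(a+h)^2 + 20*c5*(a+h)^3))
      - h*(al*(c0 + c1*a + c2*a^2 + c3*a^3 + c4*a^4 + c5*a^5)
            + be*h*(c1 + 2*c2*a + 3*c3*a^2 + 4*c4*a^3 + 5*c5*a^4)
            + ga*h^2*(2*c2 + 6*c3*a + 12*c4*a^2 + 20*c5*a^3)) := by
  linear_combination
    (h*(c0 + c1*(a+h/2) + c2*(a+h/2)^2 + c3*(a+h/2)^3 + c4*(a+h/2)^4 + c5*(a+h/2)^5))*N0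
    + (h^3*(c2 + 3*c3*(a+h/2) + 6*c4*(a+h/2)^2 + 10*c5*(a+h/2)^3))*N2
    + (h^5*(c4 + 5*c5*(a+h/2)))*N4

private lemma elemB_phys (w2v al be ga : ℝ)
    (N0 : (1:ℝ) = w2v + 2*al)
    (N2 : (1:ℝ)/12 = al/2 + 2*be + 4*ga)
    (N4 : (1:ℝ)/80 = al/8 + be + 6*ga)
    (c0 c1 c2 c3 c4 c5 a h : ℝ) :
    c0*((a+h)-a) + c1*((a+h)^2-a^2)/2 + c2*((a+h)^3-a^3)/3 + c3*((a+h)^4-a^4)/4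
      + c4*((a+h)^5-a^5)/5 + c5*((a+h)^6-a^6)/6
    = h*w2v*(c0 + c1*(a+h/2) + c2*(a+h/2)^2 + c3*(a+h/2)^3 + c4*(a+h/2)^4 + c5*(a+h/2)^5)
      + h*(al*(c0 + c1*(a+h) + c2*(a+h)^2 + c3*(a+h)^3 + c4*(a+h)^4 + c5*(a+h)^5)
            + be*h*(c1 + 2*c2*(a+h) + 3*c3*(a+h)^2 + 4*c4*(a+h)^3 + 5*c5*(a+h)^4)
            + ga*h^2*(2*c2 + 6*c3*(a+h) + 12*c4*(a+h)^2 + 20*c5*(a+h)^3))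
      - h*(-(al*(c0 + c1*a + c2*a^2 + c3*a^3 + c4*a^4 + c5*a^5))
            + be*h*(c1 + 2*c2*a + 3*c3*a^2 + 4*c4*a^3 + 5*c5*a^4)
            - ga*h^2*(2*c2 + 6*c3*a + 12*c4*a^2 + 20*c5*a^3)) := by
  linear_combination
    (h*(c0 + c1*(a+h/2) + c2*(a+h/2)^2 + c3*(a+h/2)^3 + c4*(a+h/2)^4 + c5*(a+h/2)^5))*N0
    + (h^3*(c2 + 3*c3*(a+h/2) + 6*c4*(a+h/2)^2 + 10*c5*(a+h/2)^3))*N2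
    + (h^5*(c4 + 5*c5*(a+h/2)))*N4

private lemma even_element (f : ℝ → ℝ) (hf : Differentiable ℝ f) (hf1 : Differentiable ℝ (deriv f))
    (c0 c1 c2 c3 c4 c5 a h : ℝ) (hh : 0 < h)
    (hfc : ∀ x ∈ Set.Icc a (a+h), f x = c0 + c1*x + c2*x^2 + c3*x^3 + c4*x^4 + c5*x^5)
    (Wv t al be ga : ℝ) (hT : 0 < t) (hT2 : t < 1/2)
    (N0 : (1:ℝ) = 2*Wv - 2*al)
    (N2 : (1:ℝ)/12 = 2*Wv*t^2 - al/2 + 2*be - 4*ga)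
    (N4 : (1:ℝ)/80 = 2*Wv*t^4 - al/8 + be - 6*ga) :
    ∫ x in a..(a+h), f x
      = h*Wv*(f (a + h/2 + t*h) + f (a + h/2 - t*h))
        + h*(-(al * f (a+h)) + be*h*(deriv f (a+h)) - ga*h^2*(deriv (deriv f) (a+h)))
        - h*(al * f a + be*h*(deriv f a) + ga*h^2*(deriv (deriv f) a)) := by
  have hab : a < a + h := by linarith
  have hQ := hasDerivAt_quintic c0 c1 c2 c3 c4 c5
  have hQ1 := hasDerivAt_quartic c1 c2 c3 c4 c5
  obtain ⟨d1r, d2r⟩ := deriv2_right f _ _ _ a (a+h) hab hf hf1 hQ hQ1 hfc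
  obtain ⟨d1l, d2l⟩ := deriv2_left f _ _ _ a (a+h) hab hf hf1 hQ hQ1 hfc
  have hInt : (∫ x in a..(a+h), f x)
      = ∫ x in a..(a+h), (c0 + c1*x + c2*x^2 + c3*x^3 + c4*x^4 + c5*x^5) :=
    intervalIntegral.integral_congr (fun x hx => hfc x (by rwa [Set.uIcc_of_le hab.le] at hx))
  have e1 : f (a + h/2 + t*h) = c0 + c1*(a+h/2+t*h) + c2*(a+h/2+t*h)^2 + c3*(a+h/2+t*h)^3
      + c4*(a+h/2+t*h)^4 + c5*(a+h/2+t*h)^5 :=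
    hfc _ ⟨by nlinarith, by nlinarith⟩
  have e2 : f (a + h/2 - t*h) = c0 + c1*(a+h/2-t*h) + c2*(a+h/2-t*h)^2 + c3*(a+h/2-t*h)^3
      + c4*(a+h/2-t*h)^4 + c5*(a+h/2-t*h)^5 :=
    hfc _ ⟨by nlinarith, by nlinarith⟩
  have e3 : f (a+h) = c0 + c1*(a+h) + c2*(a+h)^2 + c3*(a+h)^3 + c4*(a+h)^4 + c5*(a+h)^5 :=
    hfc _ ⟨hab.le, le_rfl⟩
  have e4 : f a = c0 + c1*a + c2*a^2 + c3*a^3 + c4*a^4 + c5*a^5 :=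
    hfc _ ⟨le_rfl, hab.le⟩
  rw [hInt, integral_quintic, e1, e2, e3, e4, d1r, d2r, d1l, d2l]
  exact elemA_phys Wv t al be ga N0 N2 N4 c0 c1 c2 c3 c4 c5 a h

private lemma odd_element (f : ℝ → ℝ) (hf : Differentiable ℝ f) (hf1 : Differentiable ℝ (deriv f))
    (c0 c1 c2 c3 c4 c5 a h : ℝ) (hh : 0 < h)
    (hfc : ∀ x ∈ Set.Icc a (a+h), f x = c0 + c1*x + c2*x^2 + c3*x^3 + c4*x^4 + c5*x^5)
    (w2v al be ga : ℝ)
    (N0 : (1:ℝ) = w2v + 2*al)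
    (N2 : (1:ℝ)/12 = al/2 + 2*be + 4*ga)
    (N4 : (1:ℝ)/80 = al/8 + be + 6*ga) :
    ∫ x in a..(a+h), f x
      = h*w2v*(f (a + h/2))
        + h*(al * f (a+h) + be*h*(deriv f (a+h)) + ga*h^2*(deriv (deriv f) (a+h)))
        - h*(-(al * f a) + be*h*(deriv f a) - ga*h^2*(deriv (deriv f) a)) := by
  have hab : a < a + h := by linarith
  have hQ := hasDerivAt_quintic c0 c1 c2 c3 c4 c5
  have hQ1 := hasDerivAt_quartic c1 c2 c3 c4 c5
  obtain ⟨d1r, d2r⟩ := deriv2_right f _ _ _ a (a+h) hab hf hf1 hQ hQ1 hfc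
  obtain ⟨d1l, d2l⟩ := deriv2_left f _ _ _ a (a+h) hab hf hf1 hQ hQ1 hfc
  have hInt : (∫ x in a..(a+h), f x)
      = ∫ x in a..(a+h), (c0 + c1*x + c2*x^2 + c3*x^3 + c4*x^4 + c5*x^5) :=
    intervalIntegral.integral_congr (fun x hx => hfc x (by rwa [Set.uIcc_of_le hab.le] at hx))
  have e1 : f (a + h/2) = c0 + c1*(a+h/2) + c2*(a+h/2)^2 + c3*(a+h/2)^3
      + c4*(a+h/2)^4 + c5*(a+h/2)^5 :=
    hfc _ ⟨by linarith, by linarith⟩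
  have e3 : f (a+h) = c0 + c1*(a+h) + c2*(a+h)^2 + c3*(a+h)^3 + c4*(a+h)^4 + c5*(a+h)^5 :=
    hfc _ ⟨hab.le, le_rfl⟩
  have e4 : f a = c0 + c1*a + c2*a^2 + c3*a^3 + c4*a^4 + c5*a^5 :=
    hfc _ ⟨le_rfl, hab.le⟩
  rw [hInt, integral_quintic, e1, e3, e4, d1r, d2r, d1l, d2l]
  exact elemB_phys w2v al be ga N0 N2 N4 c0 c1 c2 c3 c4 c5 a h

/-- The asymptotic 1.5-node-per-element Gaussian rule for C² quintic splines:
there is a node `d₁ ∈ (1/2, 1)` satisfying `164d₁⁴ - 328d₁³ + 150d₁² + 14d₁ - 5 = 0`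
and positive weights `w₁, w₂` making the rule exact on compactly supported C²
quintic splines. -/
theorem stmt_6 :
    ∃ d₁ : ℝ, d₁ ∈ Set.Ioo (1/2 : ℝ) 1 ∧
      164 * d₁^4 - 328 * d₁^3 + 150 * d₁^2 + 14 * d₁ - 5 = 0 ∧
      ∃ w₁ w₂ : ℝ, 0 < w₁ ∧ 0 < w₂ ∧
        ∀ h : ℝ, 0 < h → ∀ f : ℝ → ℝ, IsCompactlySupportedSpline 5 2 h f →
          ∫ x, f x = ∑' i : ℤ,
            h * (w₁ * (f ((2 * (i : ℝ) + d₁) * h) + f ((2 * (i : ℝ) + 1 - d₁) * h))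
              + w₂ * f ((2 * (i : ℝ) + 3/2) * h)) := by
  have hs2 : Real.sqrt 869 ^ 2 = 869 := Real.sq_sqrt (by norm_num)
  have hs_lb : (29:ℝ) < Real.sqrt 869 := by
    have : (29:ℝ) = Real.sqrt (29^2) := (Real.sqrt_sq (by norm_num)).symm
    rw [this]
    exact Real.sqrt_lt_sqrt (by norm_num) (by norm_num)
  have hs_ub : Real.sqrt 869 < 30 := by
    rw [show (30:ℝ) = Real.sqrt (30^2) from (Real.sqrt_sq (by norm_num)).symm]
    exact Real.sqrt_lt_sqrt (by norm_num) (by norm_num)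
  set s : ℝ := Real.sqrt 869 with hsdef
  have hu_pos : (0:ℝ) < (48 - s)/164 := by linarith
  have ht2 : Real.sqrt ((48 - s)/164) ^ 2 = (48 - s)/164 := Real.sq_sqrt hu_pos.le
  set t : ℝ := Real.sqrt ((48 - s)/164) with htdef
  have ht_pos : 0 < t := Real.sqrt_pos.mpr hu_pos
  have ht_lt : t < 1/2 := by
    rw [htdef]
    rw [show (1/2 : ℝ) = Real.sqrt ((1/2)^2) from (Real.sqrt_sq (by norm_num)).symm]
    exact Real.sqrt_lt_sqrt hu_pos.le (by norm_num; linarith)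
  set W : ℝ := (109 - 2*s)/75 with hWdef
  set al : ℝ := W - 1/2 with haldef
  set be : ℝ := 17/80 - 5*W/16 with hbedef
  set ga : ℝ := W/32 - 11/480 with hgadef
  have n0 : (1:ℝ) = 2*W - 2*al := by rw [haldef]; ring
  have n2 : (1:ℝ)/12 = 2*W*t^2 - al/2 + 2*be - 4*ga := by
    rw [haldef, hbedef, hgadef, hWdef]
    linear_combination (-2*((109 - 2*s)/75))*ht2 - (1/3075)*hs2
  have n4 : (1:ℝ)/80 = 2*W*t^4 - al/8 + be - 6*ga := by
    rw [haldef, hbedef, hgadef, hWdef]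
    linear_combination (-2*((109 - 2*s)/75)*(t^2 + (48 - s)/164))*ht2 + ((2*s - 301)/1008600)*hs2
  have q0 : (1:ℝ) = (2 - 2*W) + 2*al := by rw [haldef]; ring
  have q2 : (1:ℝ)/12 = al/2 + 2*be + 4*ga := by rw [haldef, hbedef, hgadef, hWdef]; ring
  have q4 : (1:ℝ)/80 = al/8 + be + 6*ga := by rw [haldef, hbedef, hgadef, hWdef]; ring
  refine ⟨1/2 + t, ⟨by linarith, by linarith⟩, ?_, W, 2 - 2*W, ?_, ?_, ?_⟩
  · linear_combination (164*(t^2 + (48 - s)/164) - 96)*ht2 + (1/164)*hs2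
  · rw [hWdef]; linarith
  · rw [hWdef]; linarith
  intro h hh f hf
  obtain ⟨hsupp, hsm, hpoly⟩ := hf
  choose p hdeg hfp using hpoly
  have hf_diff : Differentiable ℝ f := hsm.differentiable (by norm_num)
  have hderiv1 : ContDiff ℝ 1 (deriv f) := by
    have h2 : ContDiff ℝ ((1:WithTop ℕ∞) + 1) f := by
      convert hsm using 2
      norm_num
    rw [contDiff_succ_iff_deriv] at h2
    exact h2.2.2
  have hf1_diff : Differentiable ℝ (deriv f) := hderiv1.differentiable one_ne_zero
  -- support bounds
  obtain ⟨R0, hR0⟩ := hsupp.isBounded.subset_closedBall 0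
  have hzero : ∀ x : ℝ, R0 < |x| → f x = 0 ∧ deriv f x = 0 ∧ deriv (deriv f) x = 0 := by
    intro x hx
    have hxn : x ∉ tsupport f := by
      intro hc
      have := hR0 hc
      rw [Metric.mem_closedBall, Real.dist_eq, sub_zero] at this
      linarith
    have hsub1 : tsupport (deriv f) ⊆ tsupport f :=
      closure_minimal (support_deriv_subset) (isClosed_tsupport f)
    have h1 : deriv f x = 0 := by
      by_contra hc
      exact hxn (support_deriv_subset (Function.mem_support.mpr hc))
    have h2 : deriv (deriv f) x = 0 := by
      by_contra hc
      exact hxn (hsub1 (support_deriv_subset (Function.mem_support.mpr hc)))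
    exact ⟨image_eq_zero_of_notMem_tsupport hxn, h1, h2⟩
  obtain ⟨N, hN⟩ := exists_nat_gt ((R0 + 1)/(2*h))
  have hNh : R0 < 2*(N:ℝ)*h := by
    have h2h : 0 < 2*h := by linarith
    have := (div_lt_iff₀ h2h).mp hN
    nlinarith
  have hbig : ∀ x : ℝ, 2*(N:ℝ)*h ≤ |x| → f x = 0 ∧ deriv f x = 0 ∧ deriv (deriv f) x = 0 :=
    fun x hx => hzero x (lt_of_lt_of_le hNh hx)
  -- coefficients of element polynomials
  have coeffs : ∀ k : ℤ, ∀ x ∈ Icc ((k:ℝ)*h) ((k:ℝ)*h + h),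
      f x = (p k).coeff 0 + (p k).coeff 1 * x + (p k).coeff 2 * x^2 + (p k).coeff 3 * x^3
        + (p k).coeff 4 * x^4 + (p k).coeff 5 * x^5 := by
    intro k x hx
    have hx' : x ∈ Icc ((k:ℝ)*h) (((k:ℝ) + 1)*h) := by
      refine ⟨hx.1, le_trans hx.2 (by ring_nf; linarith)⟩
    have hnd : (p k).natDegree < 6 :=
      lt_of_le_of_lt (Polynomial.natDegree_le_iff_degree_le.mpr (hdeg k)) (by norm_num)
    rw [hfp k x hx', Polynomial.eval_eq_sum_range' hnd x]
    simp [Finset.sum_range_succ]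
  -- per-period identity
  have period : ∀ i : ℤ, (∫ x in ((2*(i:ℝ))*h)..((2*(i:ℝ))*h + 2*h), f x)
      = h * (W * (f ((2 * (i:ℝ) + (1/2 + t)) * h) + f ((2 * (i:ℝ) + 1 - (1/2 + t)) * h))
          + (2 - 2*W) * f ((2 * (i:ℝ) + 3/2) * h))
        + (h*(al * f ((2*(i:ℝ)+2)*h) + be*h*(deriv f ((2*(i:ℝ)+2)*h))
              + ga*h^2*(deriv (deriv f) ((2*(i:ℝ)+2)*h)))
          - h*(al * f ((2*(i:ℝ))*h) + be*h*(deriv f ((2*(i:ℝ))*h))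
              + ga*h^2*(deriv (deriv f) ((2*(i:ℝ))*h)))) := by
    intro i
    have hc1 : ∀ x ∈ Icc ((2*(i:ℝ))*h) ((2*(i:ℝ))*h + h),
        f x = (p (2*i)).coeff 0 + (p (2*i)).coeff 1 * x + (p (2*i)).coeff 2 * x^2
          + (p (2*i)).coeff 3 * x^3 + (p (2*i)).coeff 4 * x^4 + (p (2*i)).coeff 5 * x^5 := by
      intro x hx
      apply coeffs (2*i)
      convert hx using 2 <;> push_cast <;> ring
    have hc2 : ∀ x ∈ Icc ((2*(i:ℝ))*h + h) (((2*(i:ℝ))*h + h) + h),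
        f x = (p (2*i+1)).coeff 0 + (p (2*i+1)).coeff 1 * x + (p (2*i+1)).coeff 2 * x^2
          + (p (2*i+1)).coeff 3 * x^3 + (p (2*i+1)).coeff 4 * x^4 + (p (2*i+1)).coeff 5 * x^5 := by
      intro x hx
      apply coeffs (2*i+1)
      convert hx using 2 <;> push_cast <;> ring
    have HE := even_element f hf_diff hf1_diff _ _ _ _ _ _ ((2*(i:ℝ))*h) h hh hc1
      W t al be ga ht_pos ht_lt n0 n2 n4
    have HO := odd_element f hf_diff hf1_diff _ _ _ _ _ _ ((2*(i:ℝ))*h + h) h hh hc2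
      (2 - 2*W) al be ga q0 q2 q4
    have hadd := intervalIntegral.integral_add_adjacent_intervals (μ := volume)
      (a := (2*(i:ℝ))*h) (b := (2*(i:ℝ))*h + h) (c := ((2*(i:ℝ))*h + h) + h)
      (hsm.continuous.intervalIntegrable _ _) (hsm.continuous.intervalIntegrable _ _)
    rw [show (2*(i:ℝ))*h + 2*h = ((2*(i:ℝ))*h + h) + h by ring, ← hadd, HE, HO]
    rw [show (2*(i:ℝ))*h + h/2 + t*h = (2*(i:ℝ) + (1/2+t))*h by ring,
        show (2*(i:ℝ))*h + h/2 - t*h = (2*(i:ℝ) + 1 - (1/2+t))*h by ring,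
        show (2*(i:ℝ))*h + h + h/2 = (2*(i:ℝ) + 3/2)*h by ring,
        show ((2*(i:ℝ))*h + h) + h = (2*(i:ℝ)+2)*h by ring]
    ring
  -- global assembly
  set S : ℤ → ℝ := fun i =>
    h * (W * (f ((2 * (i:ℝ) + (1/2 + t)) * h) + f ((2 * (i:ℝ) + 1 - (1/2 + t)) * h))
      + (2 - 2*W) * f ((2 * (i:ℝ) + 3/2) * h)) with hSdef
  set A : ℕ → ℝ := fun j => (2*((j:ℝ) - (N:ℝ)))*h with hAdef
  set G : ℕ → ℝ := fun j =>
    h*(al * f ((2*((j:ℝ) - (N:ℝ)))*h) + be*h*(deriv f ((2*((j:ℝ) - (N:ℝ)))*h))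
      + ga*h^2*(deriv (deriv f) ((2*((j:ℝ) - (N:ℝ)))*h))) with hGdef
  have hsum := intervalIntegral.sum_integral_adjacent_intervals (μ := volume) (a := A) (n := 2*N)
    (fun k _ => hsm.continuous.intervalIntegrable (A k) (A (k+1)))
  have hlow : ∀ j : ℕ, A j = (2*((((j:ℤ) - (N:ℤ)):ℤ):ℝ))*h := by
    intro j; rw [hAdef]; push_cast; ring
  have hup : ∀ j : ℕ, A (j+1) = (2*((((j:ℤ) - (N:ℤ)):ℤ):ℝ))*h + 2*h := by
    intro j; rw [hAdef]; push_cast; ring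
  have step : ∀ j ∈ Finset.range (2*N),
      (∫ x in (A j)..(A (j+1)), f x) = S ((j:ℤ) - (N:ℤ)) + (G (j+1) - G j) := by
    intro j _
    rw [hlow j, hup j, period ((j:ℤ) - (N:ℤ)), hSdef, hGdef]
    push_cast
    ring_nf
  have eA0 : A 0 = -(2*(N:ℝ)*h) := by rw [hAdef]; push_cast; ring
  have eA2N : A (2*N) = 2*(N:ℝ)*h := by rw [hAdef]; push_cast; ring
  have hb0 := hbig (-(2*(N:ℝ)*h)) (by rw [abs_neg, abs_of_nonneg (by positivity)])
  have hb2 := hbig (2*(N:ℝ)*h) (by rw [abs_of_nonneg (by positivity)])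
  have hG0 : G 0 = 0 := by
    simp only [hGdef]
    rw [show (2*(((0:ℕ):ℝ) - (N:ℝ)))*h = -(2*(N:ℝ)*h) by push_cast; ring,
      hb0.1, hb0.2.1, hb0.2.2]
    ring
  have hG2N : G (2*N) = 0 := by
    simp only [hGdef]
    rw [show (2*((((2*N:ℕ)):ℝ) - (N:ℝ)))*h = 2*(N:ℝ)*h by push_cast; ring,
      hb2.1, hb2.2.1, hb2.2.2]
    ring
  have hglobal : ∫ x, f x = ∫ x in (A 0)..(A (2*N)), f x := by
    have hle : A 0 ≤ A (2*N) := by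
      rw [eA0, eA2N]
      have : (0:ℝ) ≤ 2*(N:ℝ)*h := by positivity
      linarith
    rw [intervalIntegral.integral_of_le hle]
    refine (setIntegral_eq_integral_of_forall_compl_eq_zero ?_).symm
    intro x hx
    rw [Set.mem_Ioc, eA0, eA2N] at hx
    rcases not_and_or.mp hx with h1 | h2
    · push_neg at h1
      exact (hbig x (by rw [abs_of_nonpos (by nlinarith)]; linarith)).1
    · push_neg at h2
      exact (hbig x (by rw [abs_of_nonneg (by nlinarith)]; linarith)).1
  have hinj : ∀ a₁ ∈ Finset.range (2*N), ∀ a₂ ∈ Finset.range (2*N),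
      ((a₁:ℤ) - (N:ℤ)) = ((a₂:ℤ) - (N:ℤ)) → a₁ = a₂ := by
    intro a _ b _ hab; omega
  have himg : ∀ i : ℤ, i ∉ (Finset.range (2*N)).image (fun j : ℕ => (j:ℤ) - (N:ℤ)) → S i = 0 := by
    intro i hi
    have hrange : i < -(N:ℤ) ∨ (N:ℤ) ≤ i := by
      by_contra hcon
      push_neg at hcon
      exact hi (Finset.mem_image.mpr ⟨(i + N).toNat, Finset.mem_range.mpr (by omega), by omega⟩)
    have hnode : ∀ e : ℝ, 0 < e → e ≤ 3/2 → f ((2*(i:ℝ) + e)*h) = 0 := by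
      intro e he1 he2
      have hN0 : (0:ℝ) ≤ (N:ℝ) := Nat.cast_nonneg N
      apply (hbig _ ?_).1
      rcases hrange with hc | hc
      · have hci : (i:ℝ) ≤ -(N:ℝ) - 1 := by exact_mod_cast (by omega : i ≤ -(N:ℤ) - 1)
        have hmul := mul_le_mul_of_nonneg_right
          (show 2*(i:ℝ) + e ≤ -(2*(N:ℝ)) by linarith) hh.le
        have hnp : (2*(i:ℝ) + e)*h ≤ 0 := by
          have := mul_le_mul_of_nonneg_right (show 2*(i:ℝ) + e ≤ 0 by linarith) hh.le
          linarith
        rw [abs_of_nonpos hnp]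
        linarith
      · have hci : (N:ℝ) ≤ (i:ℝ) := by exact_mod_cast hc
        have hmul := mul_le_mul_of_nonneg_right
          (show 2*(N:ℝ) ≤ 2*(i:ℝ) + e by linarith) hh.le
        have hnn : 0 ≤ (2*(i:ℝ) + e)*h := by
          have := mul_le_mul_of_nonneg_right (show (0:ℝ) ≤ 2*(i:ℝ) + e by linarith) hh.le
          linarith
        rw [abs_of_nonneg hnn]
        linarith
    simp only [hSdef]
    rw [show (2*(i:ℝ) + 1 - (1/2+t))*h = (2*(i:ℝ) + (1/2 - t))*h by ring,
        hnode (1/2 + t) (by linarith) (by linarith),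
        hnode (1/2 - t) (by linarith) (by linarith),
        hnode (3/2) (by norm_num) (by norm_num)]
    ring
  calc ∫ x, f x = ∫ x in (A 0)..(A (2*N)), f x := hglobal
    _ = ∑ j ∈ Finset.range (2*N), ∫ x in (A j)..(A (j+1)), f x := hsum.symm
    _ = ∑ j ∈ Finset.range (2*N), (S ((j:ℤ) - (N:ℤ)) + (G (j+1) - G j)) :=
        Finset.sum_congr rfl step
    _ = (∑ j ∈ Finset.range (2*N), S ((j:ℤ) - (N:ℤ))) + (G (2*N) - G 0) := by
        rw [Finset.sum_add_distrib, Finset.sum_range_sub]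
    _ = ∑ j ∈ Finset.range (2*N), S ((j:ℤ) - (N:ℤ)) := by rw [hG2N, hG0]; ring
    _ = ∑ i ∈ (Finset.range (2*N)).image (fun j : ℕ => (j:ℤ) - (N:ℤ)), S i :=
        (Finset.sum_image hinj).symm
    _ = ∑' i : ℤ, S i := (tsum_eq_sum himg).symm
end

section
/- Let ρ₁ < ρ₂ < ρ₃ < ρ₄ be the four real roots of the polynomial 112x⁴ − 224x³ + 141x² − 29x + 1, which all lie in (0,1). There exist weights w₁ > 0 and w₂ > 0 such that for every integer a with 1 ≤ a ≤ 6, w₁·( ρ₁^a·(1−ρ₁)^(7−a) + ρ₄^a·(1−ρ₄)^(7−a) ) + w₂·( ρ₂^a·(1−ρ₂)^(7−a) + ρ₃^a·(1−ρ₃)^(7−a) ) = a!·(7−a)!/8!. -/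
set_option maxHeartbeats 1000000


/-- Per-element moment identities for the four-node elements of the asymptotic rule
for C⁰ septic splines. If `ρ₁ < ρ₂ < ρ₃ < ρ₄` are the four real roots of
`112x⁴ - 224x³ + 141x² - 29x + 1`, all lying in `(0,1)`, then there exist positive
weights `w₁, w₂` such that for every integer `1 ≤ a ≤ 6`,
`w₁·(ρ₁^a(1-ρ₁)^(7-a) + ρ₄^a(1-ρ₄)^(7-a)) + w₂·(ρ₂^a(1-ρ₂)^(7-a) + ρ₃^a(1-ρ₃)^(7-a))
  = a!(7-a)!/8!`. -/
theorem stmt_9 (ρ₁ ρ₂ ρ₃ ρ₄ : ℝ)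
    (hord : ρ₁ < ρ₂ ∧ ρ₂ < ρ₃ ∧ ρ₃ < ρ₄)
    (h₁ : 112 * ρ₁^4 - 224 * ρ₁^3 + 141 * ρ₁^2 - 29 * ρ₁ + 1 = 0)
    (h₂ : 112 * ρ₂^4 - 224 * ρ₂^3 + 141 * ρ₂^2 - 29 * ρ₂ + 1 = 0)
    (h₃ : 112 * ρ₃^4 - 224 * ρ₃^3 + 141 * ρ₃^2 - 29 * ρ₃ + 1 = 0)
    (h₄ : 112 * ρ₄^4 - 224 * ρ₄^3 + 141 * ρ₄^2 - 29 * ρ₄ + 1 = 0)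
    (hmem : ρ₁ ∈ Set.Ioo (0 : ℝ) 1 ∧ ρ₂ ∈ Set.Ioo (0 : ℝ) 1 ∧
            ρ₃ ∈ Set.Ioo (0 : ℝ) 1 ∧ ρ₄ ∈ Set.Ioo (0 : ℝ) 1) :
    ∃ w₁ w₂ : ℝ, 0 < w₁ ∧ 0 < w₂ ∧
      ∀ a : ℕ, 1 ≤ a → a ≤ 6 →
        w₁ * (ρ₁^a * (1 - ρ₁)^(7 - a) + ρ₄^a * (1 - ρ₄)^(7 - a))
          + w₂ * (ρ₂^a * (1 - ρ₂)^(7 - a) + ρ₃^a * (1 - ρ₃)^(7 - a)) =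
        (Nat.factorial a * Nat.factorial (7 - a) : ℝ) / Nat.factorial 8 := by
  obtain ⟨h12, h23, h34⟩ := hord
  obtain ⟨⟨hm1a, hm1b⟩, ⟨hm2a, hm2b⟩, ⟨hm3a, hm3b⟩, ⟨hm4a, hm4b⟩⟩ := hmem
  -- s_i := ρ_i (1 - ρ_i) satisfy the quadratic 112 s² - 29 s + 1 = 0
  have q₁ : 112 * (ρ₁ * (1 - ρ₁))^2 - 29 * (ρ₁ * (1 - ρ₁)) + 1 = 0 := by linear_combination h₁
  have q₂ : 112 * (ρ₂ * (1 - ρ₂))^2 - 29 * (ρ₂ * (1 - ρ₂)) + 1 = 0 := by linear_combination h₂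
  have q₃ : 112 * (ρ₃ * (1 - ρ₃))^2 - 29 * (ρ₃ * (1 - ρ₃)) + 1 = 0 := by linear_combination h₃
  have q₄ : 112 * (ρ₄ * (1 - ρ₄))^2 - 29 * (ρ₄ * (1 - ρ₄)) + 1 = 0 := by linear_combination h₄
  -- pairing: ρ₄ = 1 - ρ₁ and ρ₃ = 1 - ρ₂
  have key : ∀ x y : ℝ, 112 * (x * (1 - x))^2 - 29 * (x * (1 - x)) + 1 = 0 →
      112 * (y * (1 - y))^2 - 29 * (y * (1 - y)) + 1 = 0 →
      x * (1 - x) = y * (1 - y) ∨ x * (1 - x) + y * (1 - y) = 29 / 112 := by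
    intro x y qx qy
    rcases eq_or_ne (x * (1 - x)) (y * (1 - y)) with h | h
    · exact Or.inl h
    · right
      have := sub_ne_zero.mpr h
      have hfac : (x * (1 - x) - y * (1 - y)) * (112 * (x * (1 - x) + y * (1 - y)) - 29) = 0 := by
        linear_combination qx - qy
      rcases mul_eq_zero.mp hfac with h' | h'
      · exact absurd h' this
      · linarith
  have pairup : ∀ x y : ℝ, x ≠ y → x * (1 - x) = y * (1 - y) → y = 1 - x := by
    intro x y hxy hs
    have hfac : (x - y) * (1 - x - y) = 0 := by linear_combination hs
    rcases mul_eq_zero.mp hfac with h' | h'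
    · exact absurd (sub_eq_zero.mp h') hxy
    · linarith
  have r4 : ρ₄ = 1 - ρ₁ := by
    rcases key ρ₁ ρ₄ q₁ q₄ with h | h
    · exact pairup ρ₁ ρ₄ (by linarith) h
    · -- s₁ ≠ s₄; derive contradiction
      exfalso
      rcases key ρ₁ ρ₂ q₁ q₂ with h12' | h12'
      · have e2 : ρ₂ = 1 - ρ₁ := pairup ρ₁ ρ₂ (by linarith) h12'
        rcases key ρ₃ ρ₄ q₃ q₄ with h34' | h34'
        · have e4 : ρ₄ = 1 - ρ₃ := pairup ρ₃ ρ₄ (by linarith) h34'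
          linarith
        · rcases key ρ₁ ρ₃ q₁ q₃ with h13' | h13'
          · have e3 : ρ₃ = 1 - ρ₁ := pairup ρ₁ ρ₃ (by linarith) h13'
            linarith
          · have heq : ρ₁ * (1 - ρ₁) = ρ₃ * (1 - ρ₃) := by linarith
            have e3 : ρ₃ = 1 - ρ₁ := pairup ρ₁ ρ₃ (by linarith) heq
            linarith
      · -- s₁ + s₂ = 29/112 and s₁ + s₄ = 29/112 → s₂ = s₄
        have h24 : ρ₂ * (1 - ρ₂) = ρ₄ * (1 - ρ₄) := by linarith
        have e4 : ρ₄ = 1 - ρ₂ := pairup ρ₂ ρ₄ (by linarith) h24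
        rcases key ρ₁ ρ₃ q₁ q₃ with h13' | h13'
        · have e3 : ρ₃ = 1 - ρ₁ := pairup ρ₁ ρ₃ (by linarith) h13'
          linarith
        · have h34'' : ρ₃ * (1 - ρ₃) = ρ₄ * (1 - ρ₄) := by linarith
          have e3 : ρ₄ = 1 - ρ₃ := pairup ρ₃ ρ₄ (by linarith) h34''
          linarith
  have r3 : ρ₃ = 1 - ρ₂ := by
    rcases key ρ₂ ρ₃ q₂ q₃ with h | h
    · exact pairup ρ₂ ρ₃ (by linarith) h
    · exfalso
      rcases key ρ₁ ρ₂ q₁ q₂ with h12' | h12'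
      · have e2 : ρ₂ = 1 - ρ₁ := pairup ρ₁ ρ₂ (by linarith) h12'
        linarith [r4]
      · rcases key ρ₁ ρ₃ q₁ q₃ with h13' | h13'
        · have e3 : ρ₃ = 1 - ρ₁ := pairup ρ₁ ρ₃ (by linarith) h13'
          linarith [r4]
        · have heq : ρ₁ * (1 - ρ₁) = ρ₂ * (1 - ρ₂) := by linarith
          have e2 : ρ₂ = 1 - ρ₁ := pairup ρ₁ ρ₂ (by linarith) heq
          linarith [r4]
  subst r4 r3
  set s := ρ₁ * (1 - ρ₁) with hs_def
  set t := ρ₂ * (1 - ρ₂) with ht_def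
  have hs_pos : 0 < s := mul_pos hm1a (by linarith)
  have ht_pos : 0 < t := mul_pos hm2a (by linarith)
  have hts : s < t := by
    have hfac : 0 < (ρ₂ - ρ₁) * (1 - ρ₁ - ρ₂) := mul_pos (by linarith) (by linarith)
    have hid : t - s = (ρ₂ - ρ₁) * (1 - ρ₁ - ρ₂) := by
      rw [hs_def, ht_def]; ring
    linarith
  have hsum : s + t = 29 / 112 := by
    rcases key ρ₁ ρ₂ q₁ q₂ with h | h
    · exact absurd h (ne_of_lt hts)
    · exact h
  have hprod : s * t = 1 / 112 := by
    linear_combination s * hsum - (1 / 112) * q₁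
  have ht5 : 1 / 5 < t := by
    by_contra hle
    push_neg at hle
    have h1 : 29 / 224 < t := by linarith
    nlinarith [mul_nonneg (le_of_lt (by linarith : (0:ℝ) < t - 29/224)) (by linarith : (0:ℝ) ≤ 1/5 - t)]
  have hs5 : s < 1 / 5 := by linarith
  refine ⟨(t / 12 - 1 / 60) / (s * (t - s)), (1 / 60 - s / 12) / (t * (t - s)), ?_, ?_, ?_⟩
  · apply div_pos (by linarith) (mul_pos hs_pos (by linarith))
  · apply div_pos (by linarith) (mul_pos ht_pos (by linarith))
  · have hsne : s ≠ 0 := ne_of_gt hs_pos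
    have htne : t ≠ 0 := ne_of_gt ht_pos
    have hdne : t - s ≠ 0 := by linarith
    have E1 : (t / 12 - 1 / 60) / (s * (t - s)) * s + (1 / 60 - s / 12) / (t * (t - s)) * t
        = 1 / 12 := by field_simp; ring
    have E2 : (t / 12 - 1 / 60) / (s * (t - s)) * s^2 + (1 / 60 - s / 12) / (t * (t - s)) * t^2
        = 1 / 60 := by field_simp; ring
    have E3 : (t / 12 - 1 / 60) / (s * (t - s)) * s^3 + (1 / 60 - s / 12) / (t * (t - s)) * t^3
        = 1 / 280 := by
      rw [show (t / 12 - 1 / 60) / (s * (t - s)) * s^3 + (1 / 60 - s / 12) / (t * (t - s)) * t^3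
          = (s + t) * ((t / 12 - 1 / 60) / (s * (t - s)) * s^2
              + (1 / 60 - s / 12) / (t * (t - s)) * t^2)
            - (s * t) * ((t / 12 - 1 / 60) / (s * (t - s)) * s
              + (1 / 60 - s / 12) / (t * (t - s)) * t) by field_simp; ring]
      rw [E1, E2, hsum, hprod]; norm_num
    intro a ha1 ha6
    interval_cases a <;> norm_num [Nat.factorial] <;>
      [ linear_combination E1 - 5 * E2 + 5 * E3;
        linear_combination E2 - 3 * E3;
        linear_combination E3;
        linear_combination E3;
        linear_combination E2 - 3 * E3;
        linear_combination E1 - 5 * E2 + 5 * E3 ]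
end

section
/- The polynomial q(x) = 112x⁴ − 224x³ + 141x² − 29x + 1 satisfies q(1−x) = q(x) for all real x (in particular, if ρ is a root then so is 1−ρ), and q has four distinct real roots, all lying in the open interval (0,1). -/
/-- The quartic `q(x) = 112x⁴ - 224x³ + 141x² - 29x + 1` is symmetric about `1/2`
(`q(1-x) = q(x)` for all real `x`) and has four distinct real roots, all in `(0,1)`. -/
theorem stmt_10 :
    (∀ x : ℝ, 112 * (1 - x)^4 - 224 * (1 - x)^3 + 141 * (1 - x)^2 - 29 * (1 - x) + 1 =
        112 * x^4 - 224 * x^3 + 141 * x^2 - 29 * x + 1) ∧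
    ∃ ρ₁ ρ₂ ρ₃ ρ₄ : ℝ, ρ₁ < ρ₂ ∧ ρ₂ < ρ₃ ∧ ρ₃ < ρ₄ ∧
      ρ₁ ∈ Set.Ioo (0 : ℝ) 1 ∧ ρ₂ ∈ Set.Ioo (0 : ℝ) 1 ∧
      ρ₃ ∈ Set.Ioo (0 : ℝ) 1 ∧ ρ₄ ∈ Set.Ioo (0 : ℝ) 1 ∧
      112 * ρ₁^4 - 224 * ρ₁^3 + 141 * ρ₁^2 - 29 * ρ₁ + 1 = 0 ∧
      112 * ρ₂^4 - 224 * ρ₂^3 + 141 * ρ₂^2 - 29 * ρ₂ + 1 = 0 ∧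
      112 * ρ₃^4 - 224 * ρ₃^3 + 141 * ρ₃^2 - 29 * ρ₃ + 1 = 0 ∧
      112 * ρ₄^4 - 224 * ρ₄^3 + 141 * ρ₄^2 - 29 * ρ₄ + 1 = 0 := by
  constructor
  · intro x; ring
  · set s := Real.sqrt 393 with hs
    have hs2 : s ^ 2 = 393 := Real.sq_sqrt (by norm_num)
    have hs0 : 0 ≤ s := Real.sqrt_nonneg _
    have hslt : s < 20 := by nlinarith
    have hsgt : 19 < s := by nlinarith
    set a := Real.sqrt ((27 + s) / 56) with hA
    set b := Real.sqrt ((27 - s) / 56) with hB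
    have ha2 : a ^ 2 = (27 + s) / 56 := Real.sq_sqrt (by nlinarith)
    have hb2 : b ^ 2 = (27 - s) / 56 := Real.sq_sqrt (by nlinarith)
    have ha0 : 0 ≤ a := Real.sqrt_nonneg _
    have hb0 : 0 ≤ b := Real.sqrt_nonneg _
    have hbpos : 0 < b := by nlinarith
    have hba : b < a := by nlinarith
    have ha1 : a < 1 := by nlinarith
    refine ⟨(1 - a) / 2, (1 - b) / 2, (1 + b) / 2, (1 + a) / 2, by linarith, by linarith,
      by linarith, ⟨by linarith, by linarith⟩, ⟨by linarith, by linarith⟩,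
      ⟨by linarith, by linarith⟩, ⟨by linarith, by linarith⟩, ?_, ?_, ?_, ?_⟩
    · linear_combination (7 * a ^ 2 + s / 8 - 27 / 8) * ha2 + (1 / 448) * hs2
    · linear_combination (7 * b ^ 2 - s / 8 - 27 / 8) * hb2 + (1 / 448) * hs2
    · linear_combination (7 * b ^ 2 - s / 8 - 27 / 8) * hb2 + (1 / 448) * hs2
    · linear_combination (7 * a ^ 2 + s / 8 - 27 / 8) * ha2 + (1 / 448) * hs2
end

section
/- Let d ≥ 1 and 0 ≤ c ≤ d−1 be integers, let N ≥ 1, and let a = x₀ < x₁ < … < x_N = b be real numbers. Let V be the real vector space of functions f : ℝ → ℝ such that f(x) = 0 for all x outside [a,b], f is C^c on [a,b] (i.e., c times continuously differentiable within [a,b]), and for every k with 0 ≤ k ≤ N−1 there exists a real polynomial p_k with deg p_k ≤ d such that f(x) = p_k(x) for all x ∈ [x_k, x_{k+1}]. Then V is finite-dimensional and dim V = N·d − N·c + c + 1. -/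
open Polynomial Set

private lemma spl_contDiff_eval (n : WithTop ℕ∞) (p : ℝ[X]) :
    ContDiff ℝ n fun t : ℝ => p.eval t := by
  induction p using Polynomial.induction_on' with
  | add p q hp hq => simpa [eval_add] using hp.add hq
  | monomial k a => simpa [eval_monomial] using (contDiff_const (c := a)).mul (contDiff_id.pow k)

private lemma spl_hasDerivAt_maxpow (n : ℕ) (y : ℝ) :
    HasDerivAt (fun t : ℝ => max t 0 ^ (n + 2)) ((n + 2) * max y 0 ^ (n + 1)) y := by
  rcases lt_trichotomy y 0 with hy | rfl | hy
  · have h0 : (fun t : ℝ => max t 0 ^ (n + 2)) =ᶠ[nhds y] fun _ => (0 : ℝ) ^ (n + 2) := by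
      filter_upwards [Iio_mem_nhds hy] with t ht
      rw [max_eq_right (le_of_lt ht)]
    have := (hasDerivAt_const y ((0:ℝ) ^ (n+2))).congr_of_eventuallyEq h0
    simpa [max_eq_right hy.le, zero_pow] using this
  · have : HasDerivAt (fun t : ℝ => max t 0 ^ (n + 2)) 0 0 := by
      rw [hasDerivAt_iff_isLittleO]
      rw [Asymptotics.isLittleO_iff]
      intro ε hε
      have hmin : (0:ℝ) < min ε 1 := lt_min hε one_pos
      filter_upwards [Metric.ball_mem_nhds (0:ℝ) hmin] with t ht
      rw [Metric.mem_ball, Real.dist_eq, sub_zero] at ht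
      have h1 : max t 0 ≤ |t| := max_le (le_abs_self t) (abs_nonneg t)
      have h2 : (0:ℝ) ≤ max t 0 := le_max_right t 0
      have habs : |t| ≤ 1 := le_of_lt (lt_of_lt_of_le ht (min_le_right _ _))
      calc ‖max t 0 ^ (n+2) - max (0:ℝ) 0 ^ (n+2) - (t - 0) • (0:ℝ)‖
          = max t 0 ^ (n+2) := by
            simp [Real.norm_of_nonneg (pow_nonneg h2 _), zero_pow]
        _ ≤ |t| ^ (n+2) := pow_le_pow_left₀ h2 h1 _
        _ = |t| ^ (n+1) * |t| := (pow_succ _ _)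
        _ ≤ ε * |t| := by
            refine mul_le_mul_of_nonneg_right ?_ (abs_nonneg t)
            calc |t| ^ (n+1) ≤ |t| := pow_le_of_le_one (abs_nonneg t) habs (Nat.succ_ne_zero n)
              _ ≤ ε := le_of_lt (lt_of_lt_of_le ht (min_le_left _ _))
        _ = ε * ‖t - 0‖ := by rw [sub_zero, Real.norm_eq_abs]
    simpa [zero_pow] using this
  · have h0 : (fun t : ℝ => max t 0 ^ (n + 2)) =ᶠ[nhds y] fun t => t ^ (n + 2) := by
      filter_upwards [Ioi_mem_nhds hy] with t ht
      rw [max_eq_left (le_of_lt ht)]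
    have := (hasDerivAt_pow (n+2) y).congr_of_eventuallyEq h0
    simpa [max_eq_left hy.le] using this

private lemma spl_contDiff_maxpow : ∀ n : ℕ, ContDiff ℝ n fun t : ℝ => max t 0 ^ (n + 1)
  | 0 => by
      rw [show ((0:ℕ) : WithTop ℕ∞) = 0 from rfl, contDiff_zero]
      exact (continuous_id.max continuous_const).pow 1
  | (n+1) => by
      have hcast : ((n + 1 : ℕ) : WithTop ℕ∞) = (n : WithTop ℕ∞) + 1 := by push_cast; ring
      rw [hcast, contDiff_succ_iff_deriv]
      refine ⟨fun t => (spl_hasDerivAt_maxpow n t).differentiableAt, by simp, ?_⟩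
      have hderiv : deriv (fun t : ℝ => max t 0 ^ (n + 1 + 1))
          = fun t => ((n:ℝ) + 2) * max t 0 ^ (n + 1) := by
        funext t
        simpa using (spl_hasDerivAt_maxpow n t).deriv
      rw [hderiv]
      exact contDiff_const.mul (spl_contDiff_maxpow n)

private lemma spl_dvd (q : ℝ[X]) (a : ℝ) (c : ℕ)
    (h : ∀ j ≤ c, ((⇑Polynomial.derivative)^[j] q).eval a = 0) :
    (X - C a) ^ (c + 1) ∣ q := by
  have key : X ^ (c+1) ∣ (taylor a) q := by
    rw [X_pow_dvd_iff]
    intro j hj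
    have h1 : ((⇑Polynomial.derivative)^[j] q).eval a = 0 := h j (by omega)
    have h2 : (⇑Polynomial.derivative)^[j] q = j.factorial • ((hasseDeriv j) q) := by
      rw [← Polynomial.factorial_smul_hasseDeriv]
      rfl
    rw [h2] at h1
    have h3 : (j.factorial : ℝ) * ((hasseDeriv j) q).eval a = 0 := by
      simpa [eval_smul, nsmul_eq_mul] using h1
    have hfac : (j.factorial : ℝ) ≠ 0 := Nat.cast_ne_zero.mpr j.factorial_ne_zero
    rw [taylor_coeff]
    exact (mul_eq_zero.mp h3).resolve_left hfac
  obtain ⟨s, hs⟩ := key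
  refine ⟨s.comp (X - C a), ?_⟩
  have hq : q = ((taylor a) q).comp (X - C a) := by
    rw [taylor_apply, comp_assoc]
    simp [add_comp, X_comp, C_comp, sub_add_cancel]
  rw [hq, hs, mul_comp, pow_comp, X_comp]

private lemma spl_iteratedDeriv_eval (j : ℕ) : ∀ (p : ℝ[X]),
    iteratedDeriv j (fun t : ℝ => p.eval t) = fun t => ((⇑Polynomial.derivative)^[j] p).eval t := by
  induction j with
  | zero => intro p; simp [iteratedDeriv_zero]
  | succ n ih =>
      intro p
      rw [iteratedDeriv_succ']
      have h1 : deriv (fun t : ℝ => p.eval t) = fun t : ℝ => p.derivative.eval t :=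
        funext fun t => p.deriv
      rw [h1, ih p.derivative]
      funext t
      rw [Function.iterate_succ_apply]

private lemma spl_iteratedDerivWithin_eval (p : ℝ[X]) {s : Set ℝ} (hs : UniqueDiffOn ℝ s)
    (n : ℕ) : Set.EqOn (iteratedDerivWithin n (fun t : ℝ => p.eval t) s)
      (iteratedDeriv n (fun t : ℝ => p.eval t)) s := by
  induction n with
  | zero => intro y hy; simp
  | succ n ih =>
      intro y hy
      rw [iteratedDerivWithin_succ, iteratedDeriv_succ]
      rw [derivWithin_congr ih (ih hy)]
      have hdiff : DifferentiableAt ℝ (iteratedDeriv n fun t : ℝ => p.eval t) y := by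
        rw [spl_iteratedDeriv_eval]
        exact Polynomial.differentiableAt _
      exact hdiff.derivWithin (hs.uniqueDiffWithinAt hy)

private lemma spl_sum_filter {M : Type*} [AddCommGroup M] (n : ℕ) (G : ℕ → M) :
    ∀ k, k ≤ n → ∑ j ∈ Finset.univ.filter (fun j : Fin n => (j : ℕ) < k),
      (G ((j : ℕ) + 1) - G (j : ℕ)) = G k - G 0
  | 0, _ => by simp
  | (k+1), hk => by
      have hkn : k < n := hk
      have hins : Finset.univ.filter (fun j : Fin n => (j:ℕ) < k + 1)
          = insert (⟨k, hkn⟩ : Fin n) (Finset.univ.filter (fun j : Fin n => (j:ℕ) < k)) := by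
        ext j
        simp only [Finset.mem_filter, Finset.mem_univ, true_and, Finset.mem_insert, Fin.ext_iff]
        omega
      rw [hins, Finset.sum_insert (by simp)]
      rw [spl_sum_filter n G k (by omega)]
      abel

private def splF (d c N : ℕ) (x : ℕ → ℝ)
    (m : Polynomial.degreeLT ℝ (d+1) × (Fin (N-1) → Polynomial.degreeLT ℝ (d-c))) :
    ℝ → ℝ :=
  fun t => (m.1 : ℝ[X]).eval t
    + ∑ j : Fin (N-1), max (t - x ((j:ℕ)+1)) 0 ^ (c+1) * ((m.2 j : ℝ[X]).eval t)

private noncomputable def splPhi (d c N : ℕ) (x : ℕ → ℝ) :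
    (Polynomial.degreeLT ℝ (d+1) × (Fin (N-1) → Polynomial.degreeLT ℝ (d-c))) →ₗ[ℝ] (ℝ → ℝ) where
  toFun m := (Set.Icc (x 0) (x N)).indicator (splF d c N x m)
  map_add' m m' := by
    funext t
    by_cases ht : t ∈ Set.Icc (x 0) (x N)
    · simp only [Set.indicator_of_mem ht, splF, Pi.add_apply, Prod.fst_add, Prod.snd_add,
        Submodule.coe_add, Polynomial.eval_add, mul_add, Finset.sum_add_distrib]
      ring
    · simp [Set.indicator_of_notMem ht]
  map_smul' a m := by
    funext t
    by_cases ht : t ∈ Set.Icc (x 0) (x N)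
    · simp only [Set.indicator_of_mem ht, splF, Pi.smul_apply, Prod.smul_fst, Prod.smul_snd,
        Submodule.coe_smul, Polynomial.eval_smul, smul_eq_mul, RingHom.id_apply, Finset.mul_sum]
      rw [mul_add, Finset.mul_sum]
      congr 1
      apply Finset.sum_congr rfl
      intro j _
      ring
    · simp [Set.indicator_of_notMem ht]

private lemma splPhi_apply (d c N : ℕ) (x : ℕ → ℝ)
    (m : Polynomial.degreeLT ℝ (d+1) × (Fin (N-1) → Polynomial.degreeLT ℝ (d-c))) :
    splPhi d c N x m = (Set.Icc (x 0) (x N)).indicator (splF d c N x m) := rfl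

private lemma spl_deg_le (p : ℝ[X]) (n : ℕ) (h : p.degree < ((n + 1 : ℕ) : WithBot ℕ)) :
    p.degree ≤ (n : ℕ) := by
  rcases eq_or_ne p 0 with rfl | h0
  · simp
  · rw [degree_eq_natDegree h0] at h ⊢
    exact_mod_cast Nat.lt_succ_iff.mp (by exact_mod_cast h)

/-- The spline space of degree `d` and uniform interior smoothness `C^c` over a
partition `a = x₀ < x₁ < ⋯ < x_N = b` (functions vanishing outside `[a,b]`, `c` times
continuously differentiable within `[a,b]`, and polynomial of degree `≤ d` on each
element `[x_k, x_{k+1}]`) has dimension `N·d − N·c + c + 1`. -/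
theorem stmt_15 (d c : ℕ) (hd : 1 ≤ d) (hc : c ≤ d - 1) (N : ℕ) (hN : 1 ≤ N)
    (x : ℕ → ℝ) (hx : ∀ k < N, x k < x (k + 1))
    (V : Submodule ℝ (ℝ → ℝ))
    (hV : ∀ f : ℝ → ℝ, f ∈ V ↔
      ((∀ t : ℝ, t ∉ Set.Icc (x 0) (x N) → f t = 0) ∧
       ContDiffOn ℝ c f (Set.Icc (x 0) (x N)) ∧
       ∀ k < N, ∃ p : Polynomial ℝ, p.degree ≤ d ∧
         ∀ t ∈ Set.Icc (x k) (x (k + 1)), f t = p.eval t)) :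
    FiniteDimensional ℝ V ∧ Module.finrank ℝ V = N * d - N * c + c + 1 := by
  classical
  have hlt : ∀ j, j ≤ N → ∀ i, i < j → x i < x j := by
    intro j
    induction j with
    | zero => intro _ i hi; omega
    | succ n ih =>
        intro hn i hi
        rcases Nat.lt_succ_iff_lt_or_eq.mp hi with h | h
        · exact lt_trans (ih (by omega) i h) (hx n (by omega))
        · subst h; exact hx i (by omega)
  have hle : ∀ i j, i ≤ j → j ≤ N → x i ≤ x j := by
    intro i j hij hjN
    rcases eq_or_lt_of_le hij with rfl | h
    · exact le_rfl
    · exact (hlt j hjN i h).le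
  have hx0N : x 0 < x N := hlt N le_rfl 0 (by omega)
  have hSsub : ∀ k, k < N → Set.Icc (x k) (x (k+1)) ⊆ Set.Icc (x 0) (x N) := by
    intro k hk t ht
    exact ⟨le_trans (hle 0 k (by omega) (by omega)) ht.1,
      le_trans ht.2 (hle (k+1) N (by omega) le_rfl)⟩
  have hfind : ∀ t ∈ Set.Icc (x 0) (x N), ∃ k, k < N ∧ t ∈ Set.Icc (x k) (x (k+1)) := by
    intro t ht
    set k0 := Nat.findGreatest (fun k => x k ≤ t) (N-1) with hk0
    have hk0le : k0 ≤ N - 1 := Nat.findGreatest_le _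
    have hspec : x k0 ≤ t :=
      Nat.findGreatest_spec (P := fun k => x k ≤ t) (m := 0) (n := N-1) (by omega) ht.1
    refine ⟨k0, by omega, hspec, ?_⟩
    rcases Nat.lt_or_ge k0 (N-1) with h | h
    · have := Nat.findGreatest_is_greatest (P := fun k => x k ≤ t) (n := N - 1)
        (k := k0 + 1) (by omega) (by omega)
      exact (not_le.mp this).le
    · have hk0N : k0 = N - 1 := le_antisymm hk0le h
      have : k0 + 1 = N := by omega
      rw [this]
      exact ht.2
  have hsum : ∀ (r : Fin (N-1) → ℝ[X]) (k : ℕ), k < N → ∀ t ∈ Set.Icc (x k) (x (k+1)),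
      (∑ j : Fin (N-1), max (t - x ((j:ℕ)+1)) 0 ^ (c+1) * ((r j).eval t))
        = ∑ j ∈ Finset.univ.filter (fun j : Fin (N-1) => (j:ℕ) < k),
            (((X - C (x ((j:ℕ)+1)))^(c+1) * r j).eval t) := by
    intro r k hk t ht
    rw [Finset.sum_filter]
    apply Finset.sum_congr rfl
    intro j _
    have hj2 : (j:ℕ) < N - 1 := j.2
    by_cases hjk : (j:ℕ) < k
    · rw [if_pos hjk]
      have h1 : x ((j:ℕ)+1) ≤ t := le_trans (hle ((j:ℕ)+1) k (by omega) (by omega)) ht.1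
      rw [max_eq_left (by linarith)]
      simp [eval_mul, eval_pow]
    · rw [if_neg hjk]
      have h1 : t ≤ x ((j:ℕ)+1) := le_trans ht.2 (hle (k+1) ((j:ℕ)+1) (by omega) (by omega))
      rw [max_eq_right (by linarith), zero_pow (by omega), zero_mul]
  have hXdeg : ∀ a : ℝ, (((X - C a)^(c+1) : ℝ[X])).degree = ((c+1 : ℕ) : WithBot ℕ) := by
    intro a
    rw [degree_eq_natDegree (pow_ne_zero _ (X_sub_C_ne_zero a)), natDegree_pow,
      natDegree_X_sub_C, mul_one]
  -- membership of range in V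
  have hmem : ∀ m, splPhi d c N x m ∈ V := by
    intro m
    rw [hV]
    have hFc : ContDiff ℝ c (splF d c N x m) := by
      refine ContDiff.add (spl_contDiff_eval _ _) ?_
      refine ContDiff.sum fun j _ => ?_
      refine ContDiff.mul ?_ (spl_contDiff_eval _ _)
      have := (spl_contDiff_maxpow c).comp
        ((contDiff_id (E := ℝ)).sub (contDiff_const (c := x ((j:ℕ)+1))))
      exact this
    refine ⟨fun t ht => Set.indicator_of_notMem ht _, ?_, ?_⟩
    · exact hFc.contDiffOn.congr (fun t ht => Set.indicator_of_mem ht _)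
    · intro k hk
      refine ⟨(m.1:ℝ[X]) + ∑ j ∈ Finset.univ.filter (fun j : Fin (N-1) => (j:ℕ) < k),
          (X - C (x ((j:ℕ)+1)))^(c+1) * (m.2 j : ℝ[X]), ?_, ?_⟩
      · refine le_trans (degree_add_le _ _) (max_le ?_ ?_)
        · exact spl_deg_le _ d (Polynomial.mem_degreeLT.mp m.1.2)
        · refine le_trans (degree_sum_le _ _) (Finset.sup_le ?_)
          intro j _
          rcases eq_or_ne ((m.2 j : ℝ[X])) 0 with h0 | h0
          · rw [h0, mul_zero]
            simp
          · rw [degree_mul, hXdeg, degree_eq_natDegree h0]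
            have hmem2 := Polynomial.mem_degreeLT.mp (m.2 j).2
            rw [degree_eq_natDegree h0] at hmem2
            have h5 : (m.2 j : ℝ[X]).natDegree < d - c := by exact_mod_cast hmem2
            rw [← Nat.cast_add]
            exact_mod_cast (by omega : c + 1 + (m.2 j : ℝ[X]).natDegree ≤ d)
      · intro t ht
        rw [splPhi_apply, Set.indicator_of_mem (hSsub k hk ht)]
        rw [eval_add, eval_finset_sum]
        show splF d c N x m t = _
        simp only [splF]
        rw [hsum (fun j => (m.2 j : ℝ[X])) k hk t ht]
  -- V inside range
  have hVle : V ≤ LinearMap.range (splPhi d c N x) := by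
    intro f hf
    obtain ⟨h0, h1, h2⟩ := (hV f).mp hf
    have h2' : ∀ k, ∃ p : ℝ[X], k < N →
        (p.degree ≤ (d:ℕ) ∧ ∀ t ∈ Set.Icc (x k) (x (k+1)), f t = p.eval t) := by
      intro k
      by_cases hk : k < N
      · obtain ⟨p, hp1, hp2⟩ := h2 k hk
        exact ⟨p, fun _ => ⟨hp1, hp2⟩⟩
      · exact ⟨0, fun h => absurd h hk⟩
    choose p hp using h2'
    have hUS : UniqueDiffOn ℝ (Set.Icc (x 0) (x N)) := uniqueDiffOn_Icc hx0N
    have hTay := h1.ftaylorSeriesWithin hUS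
    have hmatch : ∀ j : Fin (N-1), ∀ i, i ≤ c →
        ((⇑Polynomial.derivative)^[i] (p ((j:ℕ)+1) - p (j:ℕ))).eval (x ((j:ℕ)+1)) = 0 := by
      intro j i hi
      have hj2 : (j:ℕ) < N - 1 := j.2
      have hL : UniqueDiffOn ℝ (Set.Icc (x (j:ℕ)) (x ((j:ℕ)+1))) :=
        uniqueDiffOn_Icc (hx (j:ℕ) (by omega))
      have hR : UniqueDiffOn ℝ (Set.Icc (x ((j:ℕ)+1)) (x ((j:ℕ)+1+1))) :=
        uniqueDiffOn_Icc (hx ((j:ℕ)+1) (by omega))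
      have hLS := hSsub (j:ℕ) (by omega)
      have hRS := hSsub ((j:ℕ)+1) (by omega)
      have hxkL : x ((j:ℕ)+1) ∈ Set.Icc (x (j:ℕ)) (x ((j:ℕ)+1)) :=
        ⟨(hx (j:ℕ) (by omega)).le, le_rfl⟩
      have hxkR : x ((j:ℕ)+1) ∈ Set.Icc (x ((j:ℕ)+1)) (x ((j:ℕ)+1+1)) :=
        ⟨le_rfl, (hx ((j:ℕ)+1) (by omega)).le⟩
      have hcast : (i : WithTop ℕ∞) ≤ (c : WithTop ℕ∞) := by exact_mod_cast hi
      have hiL := (hTay.mono hLS).eq_iteratedFDerivWithin_of_uniqueDiffOn (m := i) hcast hL hxkL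
      have hiR := (hTay.mono hRS).eq_iteratedFDerivWithin_of_uniqueDiffOn (m := i) hcast hR hxkR
      have hFD : iteratedDerivWithin i f (Set.Icc (x (j:ℕ)) (x ((j:ℕ)+1))) (x ((j:ℕ)+1))
          = iteratedDerivWithin i f (Set.Icc (x ((j:ℕ)+1)) (x ((j:ℕ)+1+1))) (x ((j:ℕ)+1)) := by
        rw [iteratedDerivWithin_eq_iteratedFDerivWithin,
          iteratedDerivWithin_eq_iteratedFDerivWithin, ← hiL, ← hiR]
      have hEqL : Set.EqOn f (fun t => (p (j:ℕ)).eval t) (Set.Icc (x (j:ℕ)) (x ((j:ℕ)+1))) :=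
        fun t ht => (hp (j:ℕ) (by omega)).2 t ht
      have hEqR : Set.EqOn f (fun t => (p ((j:ℕ)+1)).eval t)
          (Set.Icc (x ((j:ℕ)+1)) (x ((j:ℕ)+1+1))) :=
        fun t ht => (hp ((j:ℕ)+1) (by omega)).2 t ht
      have e1 : iteratedDerivWithin i f (Set.Icc (x (j:ℕ)) (x ((j:ℕ)+1))) (x ((j:ℕ)+1))
          = ((⇑Polynomial.derivative)^[i] (p (j:ℕ))).eval (x ((j:ℕ)+1)) := by
        rw [iteratedDerivWithin_congr hEqL hxkL,
          spl_iteratedDerivWithin_eval _ hL i hxkL, spl_iteratedDeriv_eval]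
      have e2 : iteratedDerivWithin i f (Set.Icc (x ((j:ℕ)+1)) (x ((j:ℕ)+1+1))) (x ((j:ℕ)+1))
          = ((⇑Polynomial.derivative)^[i] (p ((j:ℕ)+1))).eval (x ((j:ℕ)+1)) := by
        rw [iteratedDerivWithin_congr hEqR hxkR,
          spl_iteratedDerivWithin_eval _ hR i hxkR, spl_iteratedDeriv_eval]
      rw [Polynomial.iterate_derivative_sub, eval_sub, ← e2, ← e1, hFD, sub_self]
    have hdvd : ∀ j : Fin (N-1), ∃ r : ℝ[X],
        p ((j:ℕ)+1) - p (j:ℕ) = (X - C (x ((j:ℕ)+1)))^(c+1) * r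
          ∧ r ∈ Polynomial.degreeLT ℝ (d-c) := by
      intro j
      have hj2 : (j:ℕ) < N - 1 := j.2
      obtain ⟨r, hr⟩ := spl_dvd _ (x ((j:ℕ)+1)) c (hmatch j)
      refine ⟨r, hr, ?_⟩
      rw [Polynomial.mem_degreeLT]
      rcases eq_or_ne r 0 with rfl | hr0
      · rw [degree_zero]
        exact lt_of_lt_of_le (WithBot.bot_lt_coe 0) (by exact_mod_cast Nat.zero_le (d-c))
      · have hq : (p ((j:ℕ)+1) - p (j:ℕ)).degree ≤ (d:ℕ) :=
          le_trans (degree_sub_le _ _)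
            (max_le (hp ((j:ℕ)+1) (by omega)).1 (hp (j:ℕ) (by omega)).1)
        rw [hr, degree_mul, hXdeg, degree_eq_natDegree hr0, ← Nat.cast_add] at hq
        have h5 : c + 1 + r.natDegree ≤ d := by exact_mod_cast hq
        rw [degree_eq_natDegree hr0]
        exact_mod_cast (by omega : r.natDegree < d - c)
    choose r hr hrmem using hdvd
    have hp0mem : p 0 ∈ Polynomial.degreeLT ℝ (d+1) := by
      rw [Polynomial.mem_degreeLT]
      exact lt_of_le_of_lt (hp 0 (by omega)).1 (by exact_mod_cast Nat.lt_succ_self d)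
    refine ⟨(⟨p 0, hp0mem⟩, fun j => ⟨r j, hrmem j⟩), ?_⟩
    funext t
    rw [splPhi_apply]
    by_cases ht : t ∈ Set.Icc (x 0) (x N)
    · rw [Set.indicator_of_mem ht]
      obtain ⟨k, hk, htk⟩ := hfind t ht
      show splF d c N x _ t = f t
      simp only [splF]
      rw [hsum (fun j => ((⟨r j, hrmem j⟩ : Polynomial.degreeLT ℝ (d-c)) : ℝ[X])) k hk t htk]
      have hterm : ∀ jj : Fin (N-1),
          (((X - C (x ((jj:ℕ)+1)))^(c+1))
            * ((⟨r jj, hrmem jj⟩ : Polynomial.degreeLT ℝ (d-c)) : ℝ[X])).eval t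
          = (fun i => (p i).eval t) ((jj:ℕ)+1) - (fun i => (p i).eval t) (jj:ℕ) := by
        intro jj
        have hco : ((⟨r jj, hrmem jj⟩ : Polynomial.degreeLT ℝ (d-c)) : ℝ[X]) = r jj := rfl
        rw [hco, ← hr jj, eval_sub]
      rw [Finset.sum_congr rfl (fun jj _ => hterm jj)]
      rw [spl_sum_filter (N-1) (fun i => (p i).eval t) k (by omega)]
      have hfk := (hp k hk).2 t htk
      rw [hfk]
      ring
    · rw [Set.indicator_of_notMem ht, h0 t ht]
  -- injectivity
  have hinj : Function.Injective (splPhi d c N x) := by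
    have hker : ∀ m, splPhi d c N x m = 0 → m = 0 := by
      intro m hm
      have hF0 : ∀ t ∈ Set.Icc (x 0) (x N), splF d c N x m t = 0 := by
        intro t ht
        have h6 : splPhi d c N x m t = 0 := by rw [hm]; rfl
        rwa [splPhi_apply, Set.indicator_of_mem ht] at h6
      have hm1 : (m.1 : ℝ[X]) = 0 := by
        apply Polynomial.eq_zero_of_infinite_isRoot
        refine Set.Infinite.mono ?_ (Set.Ioo_infinite (hx 0 (by omega)))
        intro t htIoo
        have ht1 : t ∈ Set.Icc (x 0) (x (0+1)) := Set.Ioo_subset_Icc_self htIoo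
        have htS : t ∈ Set.Icc (x 0) (x N) := hSsub 0 (by omega) ht1
        have h5 := hF0 t htS
        simp only [splF] at h5
        rw [hsum (fun j => ((m.2 j : ℝ[X]))) 0 (by omega) t ht1] at h5
        simpa using h5
      have hm2 : ∀ n (hn : n < N - 1), (m.2 ⟨n, hn⟩ : ℝ[X]) = 0 := by
        intro n
        induction n using Nat.strong_induction_on with
        | _ n ih =>
          intro hn
          apply Polynomial.eq_zero_of_infinite_isRoot
          refine Set.Infinite.mono ?_ (Set.Ioo_infinite (hx (n+1) (by omega)))
          intro t htIoo
          have ht1 : t ∈ Set.Icc (x (n+1)) (x (n+1+1)) := Set.Ioo_subset_Icc_self htIoo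
          have htS : t ∈ Set.Icc (x 0) (x N) := hSsub (n+1) (by omega) ht1
          have h5 := hF0 t htS
          simp only [splF] at h5
          rw [hsum (fun j => ((m.2 j : ℝ[X]))) (n+1) (by omega) t ht1, hm1] at h5
          have hsingle : ∑ j ∈ Finset.univ.filter (fun j : Fin (N-1) => (j:ℕ) < n+1),
              (((X - C (x ((j:ℕ)+1)))^(c+1) * ((m.2 j : ℝ[X]))).eval t)
              = (((X - C (x (((⟨n, hn⟩ : Fin (N-1)):ℕ)+1)))^(c+1)
                  * ((m.2 ⟨n, hn⟩ : ℝ[X]))).eval t) := by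
            apply Finset.sum_eq_single_of_mem (⟨n, hn⟩ : Fin (N-1))
            · exact Finset.mem_filter.mpr ⟨Finset.mem_univ _, by simp⟩
            · intro b hb hbn
              have hb2 := (Finset.mem_filter.mp hb).2
              have hbn' : (b:ℕ) < n := by
                rcases Nat.lt_succ_iff_lt_or_eq.mp hb2 with h | h
                · exact h
                · exact absurd (Fin.ext h) hbn
              have hb0 : (m.2 b : ℝ[X]) = 0 := by
                have h7 := ih (b:ℕ) hbn' (by omega)
                simpa [Fin.eta] using h7
              rw [hb0, mul_zero, eval_zero]
          rw [hsingle] at h5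
          rw [eval_zero, zero_add, eval_mul, eval_pow, eval_sub, eval_X, eval_C] at h5
          have hne : (t - x (n+1)) ^ (c+1) ≠ 0 :=
            pow_ne_zero _ (sub_ne_zero.mpr (ne_of_gt htIoo.1))
          exact (mul_eq_zero.mp h5).resolve_left hne
      obtain ⟨m1, m2⟩ := m
      have hz1 : m1 = 0 := Subtype.ext (by simpa using hm1)
      have hz2 : m2 = 0 := by
        funext jj
        exact Subtype.ext (by simpa [Fin.eta] using hm2 (jj:ℕ) jj.2)
      rw [hz1, hz2]
      rfl
    intro a b hab
    have h8 := hker (a - b) (by rw [map_sub, hab, sub_self])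
    exact sub_eq_zero.mp h8
  have hrange : LinearMap.range (splPhi d c N x) = V := by
    refine le_antisymm ?_ hVle
    rintro g ⟨m, rfl⟩
    exact hmem m
  haveI hfin1 : FiniteDimensional ℝ (Polynomial.degreeLT ℝ (d+1)) :=
    Module.Finite.equiv (Polynomial.degreeLTEquiv ℝ (d+1)).symm
  haveI hfin2 : FiniteDimensional ℝ (Polynomial.degreeLT ℝ (d-c)) :=
    Module.Finite.equiv (Polynomial.degreeLTEquiv ℝ (d-c)).symm
  have he := (LinearEquiv.ofInjective (splPhi d c N x) hinj).finrank_eq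
  haveI hfinR : FiniteDimensional ℝ (LinearMap.range (splPhi d c N x)) :=
    Module.Finite.equiv (LinearEquiv.ofInjective (splPhi d c N x) hinj)
  rw [← hrange]
  refine ⟨hfinR, ?_⟩
  rw [← he]
  have hM : Module.finrank ℝ
      (Polynomial.degreeLT ℝ (d+1) × (Fin (N-1) → Polynomial.degreeLT ℝ (d-c)))
      = (d+1) + (N-1)*(d-c) := by
    rw [Module.finrank_prod]
    congr 1
    · rw [(Polynomial.degreeLTEquiv ℝ (d+1)).finrank_eq]
      simp [Module.finrank_pi]
    · rw [Module.finrank_pi_fintype]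
      have h4 : Module.finrank ℝ (Polynomial.degreeLT ℝ (d-c)) = d - c := by
        rw [(Polynomial.degreeLTEquiv ℝ (d-c)).finrank_eq]
        simp [Module.finrank_pi]
      simp [h4, Finset.sum_const, Finset.card_univ, Fintype.card_fin, mul_comm]
  rw [hM]
  obtain ⟨e', he'⟩ : ∃ e', d = c + e' := ⟨d - c, by omega⟩
  have h1 : N * d - N * c = N * e' := by
    rw [he', Nat.mul_add, Nat.add_sub_cancel_left]
  have h2 : (N-1) * (d - c) = N * e' - e' := by
    rw [he', Nat.add_sub_cancel_left, Nat.sub_mul, one_mul]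
  have h3 : e' ≤ N * e' := Nat.le_mul_of_pos_left e' (by omega)
  rw [h1, h2, he']
  generalize N * e' = A at h3 ⊢
  omega
end
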